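/- arXiv:1406.3070 — 7 statements merged into one kernel-verified Lean document; each statement's English description precedes it below -/
import Mathlib

section
/- Let G = (V, E) be an undirected graph and A ⊆ V. Define the induced graph G_A on vertex set A by eliminating (in any order) all vertices of V \ A, where eliminating a vertex s adds edges between all pairs of neighbors of s and then deletes s. Then for i, j ∈ A with i ≠ j, the edge (i, j) exists in G_A if and only if either (i, j) ∈ E, or i and j are path connected with respect to V \ A (i.e., there is a path from i to j in G with at least one interior vertex, all interior vertices lying in V \ A). -/
/-- Path connectivity with respect to `V \ A`. -/
def RelPathConn {V : Type*} (G : SimpleGraph V) (A : Set V) (i j : V) : Prop :=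
  ∃ w : G.Walk i j, w.IsPath ∧ w.support.tail.dropLast ≠ [] ∧
    ∀ v ∈ w.support.tail.dropLast, v ∉ A

/-- Eliminating a single vertex `s`: keep all edges not incident to `s`, add all
pairs of distinct neighbours of `s`, and isolate (remove) `s`. -/
def elimGraph {V : Type*} (G : SimpleGraph V) (s : V) : SimpleGraph V where
  Adj u v := u ≠ v ∧ ((G.Adj u v ∧ u ≠ s ∧ v ≠ s) ∨ (G.Adj u s ∧ G.Adj v s))
  symm := by
    constructor
    rintro u v ⟨h1, h2 | h3⟩
    · exact ⟨h1.symm, Or.inl ⟨h2.1.symm, h2.2.2, h2.2.1⟩⟩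
    · exact ⟨h1.symm, Or.inr ⟨h3.2, h3.1⟩⟩
  loopless := by constructor; rintro u ⟨h, -⟩; exact h rfl

/-- Successively eliminating the vertices in the list `l`. -/
def elimAll {V : Type*} (G : SimpleGraph V) (l : List V) : SimpleGraph V :=
  l.foldl elimGraph G

/-! Eliminating `s` turns every walk of `G` whose ends differ from `s` into a walk avoiding `s`
(shortcut each visit `u s v` by the edge `u v` that the elimination adds), and conversely every
new edge `u v` is the walk `u s v` of `G`. By induction along the elimination list, `i, j ∈ A`
are adjacent in `G_A` iff `G` has an `i`-`j` walk whose other vertices all lie outside `A`;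
shortening that walk to a path yields either the edge `i j` or a path whose nonempty interior
lies in `V \ A`. -/

namespace SimpleGraph.Walk

variable {V : Type*} {G : SimpleGraph V}

lemma IsPath.mem_support_tail_dropLast_iff {u v x : V} {p : G.Walk u v} (hp : p.IsPath) :
    x ∈ p.support.tail.dropLast ↔ x ∈ p.support ∧ x ≠ u ∧ x ≠ v := by
  cases p with
  | nil => simp
  | cons h q =>
    have hnd := hp.support_nodup
    rw [support_cons, ← q.dropLast_support_concat] at hnd ⊢
    simp only [List.tail_cons, List.mem_cons, List.mem_append]
    simp only [List.nodup_cons, List.nodup_append, List.mem_append, List.mem_singleton] at hnd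
    grind

lemma adj_of_support_tail_dropLast_eq_nil {u v : V} (p : G.Walk u v) (huv : u ≠ v)
    (h : p.support.tail.dropLast = []) : G.Adj u v := by
  have hlen := congrArg List.length h
  simp only [List.length_dropLast, List.length_tail, length_support, List.length_nil] at hlen
  have hne : p.length ≠ 0 := fun h0 => huv (eq_of_length_eq_zero h0)
  exact adj_of_length_eq_one (p := p) (by omega)

end SimpleGraph.Walk

section

variable {V : Type*} {G : SimpleGraph V}

@[simp]
lemma elimGraph_adj {s u v : V} : (elimGraph G s).Adj u v ↔
    u ≠ v ∧ ((G.Adj u v ∧ u ≠ s ∧ v ≠ s) ∨ (G.Adj u s ∧ G.Adj v s)) :=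
  Iff.rfl

lemma SimpleGraph.Walk.exists_walk_of_elimGraph {s u v : V} (w : (elimGraph G s).Walk u v) :
    ∃ w' : G.Walk u v, w'.support ⊆ s :: w.support := by
  induction w with
  | nil => exact ⟨.nil, by simp⟩
  | cons h _ ih =>
    obtain ⟨w', hw'⟩ := ih
    rcases (elimGraph_adj.mp h).2 with ⟨hub, -, -⟩ | ⟨hus, hbs⟩
    · refine ⟨.cons hub w', ?_⟩
      simp only [support_cons, List.cons_subset]
      grind
    · refine ⟨.cons hus (.cons hbs.symm w'), ?_⟩
      simp only [support_cons, List.cons_subset]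
      grind

lemma SimpleGraph.Walk.exists_elimGraph_walk {s : V} :
    ∀ {u v : V} (w : G.Walk u v), u ≠ s → v ≠ s →
      ∃ w' : (elimGraph G s).Walk u v, w'.support ⊆ w.support ∧ s ∉ w'.support
  | _, _, .nil, hu, _ => ⟨.nil, by simp, by simpa using hu.symm⟩
  | _, _, .cons h .nil, hu, hv =>
    ⟨.cons (elimGraph_adj.mpr ⟨G.ne_of_adj h, .inl ⟨h, hu, hv⟩⟩) .nil, by simp,
      by simp [hu.symm, hv.symm]⟩
  | u, _, .cons (v := b) h (.cons (v := c) h' q), hu, hv => by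
    by_cases hb : b = s
    · subst hb
      have hc : c ≠ b := (G.ne_of_adj h').symm
      obtain ⟨w', hsub, hs⟩ := exists_elimGraph_walk q hc hv
      by_cases hcu : c = u
      · subst hcu
        exact ⟨w', fun x hx => by simpa using .inr (.inr (hsub hx)), hs⟩
      · refine ⟨.cons (elimGraph_adj.mpr ⟨Ne.symm hcu, .inr ⟨h, h'.symm⟩⟩) w', ?_, ?_⟩
        · simp only [support_cons, List.cons_subset]
          grind
        · simp only [support_cons, List.mem_cons]
          grind
    · obtain ⟨w', hsub, hs⟩ := exists_elimGraph_walk (.cons h' q) hb hv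
      refine ⟨.cons (elimGraph_adj.mpr ⟨G.ne_of_adj h, .inl ⟨h, hu, hb⟩⟩) w', ?_, ?_⟩
      · simp only [support_cons, List.cons_subset]
        grind
      · simp only [support_cons, List.mem_cons]
        grind

lemma exists_walk_support_subset_iff_adj_or_relPathConn {i j : V} (hij : i ≠ j) (S : List V) :
    (∃ w : G.Walk i j, w.support ⊆ i :: j :: S) ↔ G.Adj i j ∨ RelPathConn G {v | v ∉ S} i j := by
  classical
  constructor
  · rintro ⟨w, hw⟩
    have hp := w.bypass_isPath
    by_cases hI : w.bypass.support.tail.dropLast = []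
    · exact .inl (w.bypass.adj_of_support_tail_dropLast_eq_nil hij hI)
    · refine .inr ⟨w.bypass, hp, hI, fun v hv => ?_⟩
      obtain ⟨hv, hvi, hvj⟩ := hp.mem_support_tail_dropLast_iff.mp hv
      simpa [hvi, hvj] using hw (w.support_bypass_subset_support hv)
  · rintro (h | ⟨w, hp, -, hI⟩)
    · exact ⟨.cons h .nil, by simp⟩
    · refine ⟨w, fun v hv => ?_⟩
      by_cases hvi : v = i
      · simp [hvi]
      by_cases hvj : v = j
      · simp [hvj]
      have hvS : v ∈ S := by simpa using hI v (hp.mem_support_tail_dropLast_iff.mpr ⟨hv, hvi, hvj⟩)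
      exact .tail _ (.tail _ hvS)

lemma elimAll_adj_iff_exists_walk (l : List V) {i j : V} (hij : i ≠ j)
    (hi : i ∉ l) (hj : j ∉ l) :
    (elimAll G l).Adj i j ↔ ∃ w : G.Walk i j, w.support ⊆ i :: j :: l := by
  induction l generalizing G with
  | nil =>
    rw [exists_walk_support_subset_iff_adj_or_relPathConn hij]
    simp [elimAll, RelPathConn, ← List.eq_nil_iff_forall_not_mem]
  | cons s l ih =>
    simp only [List.mem_cons, not_or] at hi hj
    obtain ⟨his, hi⟩ := hi
    obtain ⟨hjs, hj⟩ := hj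
    change (elimAll (elimGraph G s) l).Adj i j ↔ _
    rw [ih hi hj]
    constructor
    · rintro ⟨w, hw⟩
      obtain ⟨w', hw'⟩ := w.exists_walk_of_elimGraph
      exact ⟨w', fun v hv => by grind⟩
    · rintro ⟨w, hw⟩
      obtain ⟨w', hw', hs⟩ := w.exists_elimGraph_walk his hjs
      exact ⟨w', fun v hv => by grind⟩

end

theorem elimAll_adj_iff_general {V : Type*} (G : SimpleGraph V) (A : Set V)
    (l : List V) (hl : ∀ v, v ∈ l ↔ v ∉ A)
    (i j : V) (hi : i ∈ A) (hj : j ∈ A) (hij : i ≠ j) :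
    (elimAll G l).Adj i j ↔ G.Adj i j ∨ RelPathConn G A i j := by
  have hA : {v | v ∉ l} = A := Set.ext fun v => by simp [hl]
  rw [elimAll_adj_iff_exists_walk l hij (fun h => (hl i).mp h hi) (fun h => (hl j).mp h hj),
    exists_walk_support_subset_iff_adj_or_relPathConn hij, hA]

/-- The induced graph `G_A`, obtained by eliminating the vertices of `V \ A` in any
order, has an edge between distinct `i, j ∈ A` if and only if `(i, j) ∈ E` or `i` and
`j` are path connected with respect to `V \ A`.  (In particular the result is
independent of the elimination order.) -/
theorem elimAll_adj_iff {V : Type*} [Fintype V] (G : SimpleGraph V) (A : Set V)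
    (l : List V) (hnd : l.Nodup) (hl : ∀ v, v ∈ l ↔ v ∉ A)
    (i j : V) (hi : i ∈ A) (hj : j ∈ A) (hij : i ≠ j) :
    (elimAll G l).Adj i j ↔ G.Adj i j ∨ RelPathConn G A i j :=
  elimAll_adj_iff_general G A l hl i j hi hj hij
end

section
/- Let p be a strictly positive probability distribution on a finite product space ∏_{v ∈ V} X_v where each X_v contains a designated element 0. Then there exists exactly one family of potentials (E_c)_{c ⊆ V} normalized with respect to zero (i.e., E_c(x) = 0 whenever x_t = 0 for some t ∈ c) such that p(x) = (1/Z) exp(−Σ_c E_c(x_c)) for all x. -/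
open Finset

private lemma sum_neg_one_pow' {V : Type*} [DecidableEq V] (s : Finset V) :
    ∑ d ∈ s.powerset, (-1 : ℝ) ^ d.card = if s = ∅ then 1 else 0 := by
  have h := Finset.sum_powerset_neg_one_pow_card (x := s)
  have : ((∑ d ∈ s.powerset, (-1 : ℤ) ^ d.card : ℤ) : ℝ)
      = ∑ d ∈ s.powerset, (-1 : ℝ) ^ d.card := by push_cast; rfl
  rw [← this, h]
  split <;> simp

private lemma sum_interval_neg_one_pow {V : Type*} [DecidableEq V] (a b : Finset V)
    (hb : b ⊆ a) :
    ∑ c ∈ a.powerset.filter (fun c => b ⊆ c), (-1 : ℝ) ^ (c \ b).card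
      = if b = a then 1 else 0 := by
  have h1 : ∑ c ∈ a.powerset.filter (fun c => b ⊆ c), (-1 : ℝ) ^ (c \ b).card
      = ∑ d ∈ (a \ b).powerset, (-1 : ℝ) ^ d.card := by
    refine Finset.sum_nbij' (i := fun c => c \ b) (j := fun d => d ∪ b) ?_ ?_ ?_ ?_ ?_
    · intro c hc
      simp only [mem_filter, mem_powerset] at hc
      exact mem_powerset.mpr (sdiff_subset_sdiff hc.1 le_rfl)
    · intro d hd
      simp only [mem_powerset] at hd
      simp only [mem_filter, mem_powerset]
      exact ⟨union_subset (hd.trans (sdiff_subset)) hb, subset_union_right⟩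
    · intro c hc
      simp only [mem_filter, mem_powerset] at hc
      exact sdiff_union_of_subset hc.2
    · intro d hd
      simp only [mem_powerset] at hd
      have hdisj : Disjoint d b := (Finset.sdiff_disjoint.mono_left hd)
      exact union_sdiff_cancel_right hdisj
    · intro c hc; rfl
  rw [h1, sum_neg_one_pow']
  congr 1
  rw [sdiff_eq_empty_iff_subset]
  apply propext
  exact ⟨fun h => subset_antisymm hb h, fun h => h ▸ le_rfl⟩

private lemma mobius_sum' {V : Type*} [DecidableEq V] (a : Finset V) (L : Finset V → ℝ) :
    ∑ c ∈ a.powerset, ∑ b ∈ c.powerset, (-1 : ℝ) ^ (c \ b).card * L b = L a := by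
  rw [Finset.sum_comm' (t' := a.powerset)
    (s' := fun b => a.powerset.filter (fun c => b ⊆ c))
    (fun c b => by
      simp only [mem_powerset, mem_filter]
      constructor
      · rintro ⟨h1, h2⟩; exact ⟨⟨h1, h2⟩, h2.trans h1⟩
      · rintro ⟨⟨h1, h2⟩, _⟩; exact ⟨h1, h2⟩)]
  have : ∀ b ∈ a.powerset,
      ∑ c ∈ a.powerset.filter (fun c => b ⊆ c), (-1 : ℝ) ^ (c \ b).card * L b
      = (if b = a then 1 else 0) * L b := by
    intro b hb
    rw [← Finset.sum_mul, sum_interval_neg_one_pow a b (mem_powerset.mp hb)]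
  rw [Finset.sum_congr rfl this]
  simp [Finset.sum_ite_eq' a.powerset a (fun b => L b)]

private lemma sign_flip' {V : Type*} [DecidableEq V] {c b : Finset V} {t : V}
    (htc : t ∈ c) (htb : t ∉ b) :
    (-1 : ℝ) ^ (c \ b).card = -(-1 : ℝ) ^ (c \ insert t b).card := by
  have hins : c \ b = insert t (c \ insert t b) := by
    ext v
    simp only [mem_sdiff, mem_insert]
    by_cases hv : v = t
    · subst hv; simp [htc, htb]
    · simp [hv]
  have htni : t ∉ c \ insert t b := by simp
  rw [hins, card_insert_of_notMem htni, pow_succ]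
  ring

private lemma sum_powerset_potential {V : Type*} [Fintype V] [DecidableEq V] {X : V → Type*}
    (z : ∀ v, X v) (F : Finset V → (∀ v, X v) → ℝ)
    (hdep : ∀ c x y, (∀ v ∈ c, x v = y v) → F c x = F c y)
    (hnorm : ∀ (c : Finset V) x, (∃ t ∈ c, x t = z t) → F c x = 0)
    (a : Finset V) (x : ∀ v, X v) :
    ∑ c : Finset V, F c (fun v => if v ∈ a then x v else z v)
      = ∑ c ∈ a.powerset, F c x := by
  rw [show (Finset.univ : Finset (Finset V)) = (Finset.univ : Finset V).powerset by
    rw [Finset.powerset_univ]]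
  rw [← Finset.sum_subset (Finset.powerset_mono.mpr (Finset.subset_univ a))
    (fun c _ hc => ?_)]
  · refine Finset.sum_congr rfl fun c hc => ?_
    refine hdep c _ x fun v hv => ?_
    simp [mem_powerset.mp hc hv]
  · rw [mem_powerset] at hc
    obtain ⟨t, htc, hta⟩ := Finset.not_subset.mp hc
    exact hnorm c _ ⟨t, htc, by simp [hta]⟩

private lemma potentials_sum_zero {V : Type*} [Fintype V] [DecidableEq V] {X : V → Type*}
    (z : ∀ v, X v) (F : Finset V → (∀ v, X v) → ℝ)
    (hnorm : ∀ (c : Finset V) x, (∃ t ∈ c, x t = z t) → F c x = 0)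
    (hemp : ∀ x, F ∅ x = 0) :
    ∑ c : Finset V, F c z = 0 := by
  refine Finset.sum_eq_zero fun c _ => ?_
  rcases eq_or_ne c ∅ with rfl | hc
  · exact hemp z
  · obtain ⟨t, ht⟩ := Finset.nonempty_iff_ne_empty.mpr hc
    exact hnorm c z ⟨t, ht, rfl⟩

private lemma potentials_unique' {V : Type*} [Fintype V] [DecidableEq V] {X : V → Type*}
    (z : ∀ v, X v) (E1 E2 : Finset V → (∀ v, X v) → ℝ)
    (h1a : ∀ c x y, (∀ v ∈ c, x v = y v) → E1 c x = E1 c y)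
    (h1b : ∀ (c : Finset V) x, (∃ t ∈ c, x t = z t) → E1 c x = 0)
    (h1c : ∀ x, E1 ∅ x = 0)
    (h2a : ∀ c x y, (∀ v ∈ c, x v = y v) → E2 c x = E2 c y)
    (h2b : ∀ (c : Finset V) x, (∃ t ∈ c, x t = z t) → E2 c x = 0)
    (h2c : ∀ x, E2 ∅ x = 0)
    (hS : ∀ x, ∑ c : Finset V, E1 c x = ∑ c : Finset V, E2 c x) :
    E1 = E2 := by
  have key : ∀ n, ∀ a : Finset V, a.card ≤ n → ∀ x, E1 a x = E2 a x := by
    intro n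
    induction n with
    | zero =>
      intro a ha x
      rw [Finset.card_eq_zero.mp (Nat.le_zero.mp ha)]
      rw [h1c x, h2c x]
    | succ n ih =>
      intro a ha x
      rcases eq_or_ne a ∅ with rfl | hne
      · rw [h1c x, h2c x]
      · have hmem : a ∈ a.powerset := Finset.mem_powerset_self a
        have hsum_eq : ∑ c ∈ a.powerset, E1 c x = ∑ c ∈ a.powerset, E2 c x := by
          rw [← sum_powerset_potential z E1 h1a h1b a x,
              ← sum_powerset_potential z E2 h2a h2b a x, hS]
        rw [← Finset.add_sum_erase _ _ hmem, ← Finset.add_sum_erase _ _ hmem] at hsum_eq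
        have htail : ∑ c ∈ a.powerset.erase a, E1 c x
            = ∑ c ∈ a.powerset.erase a, E2 c x := by
          refine Finset.sum_congr rfl fun c hc => ?_
          have hcs : c ⊂ a := by
            rw [Finset.mem_erase, Finset.mem_powerset] at hc
            exact lt_of_le_of_ne hc.2 hc.1
          have : c.card < a.card := Finset.card_lt_card hcs
          exact ih c (by omega) x
        linarith
  funext a x
  exact key a.card a le_rfl x

/-- Existence and uniqueness of zero-normalized potentials: every strictly positive
probability distribution `p` on a finite product space `∏ v, X v` (each factor with
designated element `z v`) has exactly one Gibbs representation
`p x = (1/Z) · exp (−∑_c E_c x)` in which each potential `E_c` depends only on the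
coordinates in `c`, is normalized with respect to zero (it vanishes whenever some
coordinate in `c` equals the designated element), and the empty set carries no
potential. -/
theorem unique_zero_normalized_potentials
    {V : Type*} [Fintype V] [DecidableEq V] (X : V → Type*) [∀ v, Fintype (X v)]
    (z : ∀ v, X v) (p : (∀ v, X v) → ℝ)
    (hpos : ∀ x, 0 < p x) (hsum : ∑ x, p x = 1) :
    ∃! E : Finset V → (∀ v, X v) → ℝ,
      (∀ c x y, (∀ v ∈ c, x v = y v) → E c x = E c y) ∧
      (∀ (c : Finset V) x, (∃ t ∈ c, x t = z t) → E c x = 0) ∧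
      (∀ x, E ∅ x = 0) ∧
      ∃ Z : ℝ, 0 < Z ∧ ∀ x, p x = (1 / Z) * Real.exp (-∑ c : Finset V, E c x) := by
  classical
  set patt : Finset V → (∀ v, X v) → (∀ v, X v) :=
    fun b x v => if v ∈ b then x v else z v with hpatt
  set L : Finset V → (∀ v, X v) → ℝ := fun b x => Real.log (p (patt b x)) with hL
  set E : Finset V → (∀ v, X v) → ℝ := fun c x =>
    if c = ∅ then 0 else -∑ b ∈ c.powerset, (-1 : ℝ) ^ (c \ b).card * L b x with hE
  have hLdep : ∀ (b : Finset V) x y, (∀ v ∈ b, x v = y v) → L b x = L b y := by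
    intro b x y h
    have hpe : patt b x = patt b y := by
      funext v
      simp only [hpatt]
      by_cases hv : v ∈ b
      · simp [hv, h v hv]
      · simp [hv]
    simp [hL, hpe]
  have prop1 : ∀ (c : Finset V) x y, (∀ v ∈ c, x v = y v) → E c x = E c y := by
    intro c x y h
    simp only [hE]
    rcases eq_or_ne c ∅ with rfl | hc
    · simp
    · rw [if_neg hc, if_neg hc]
      congr 1
      refine Finset.sum_congr rfl fun b hb => ?_
      rw [hLdep b x y fun v hv => h v (mem_powerset.mp hb hv)]
  have prop2 : ∀ (c : Finset V) x, (∃ t ∈ c, x t = z t) → E c x = 0 := by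
    rintro c x ⟨t, htc, hxt⟩
    have hc : c ≠ ∅ := Finset.ne_empty_of_mem htc
    simp only [hE, if_neg hc, neg_eq_zero]
    have hrw : c = insert t (c.erase t) := (Finset.insert_erase htc).symm
    rw [hrw, Finset.sum_powerset_insert (Finset.notMem_erase t c)]
    rw [← Finset.sum_add_distrib]
    refine Finset.sum_eq_zero fun b hb => ?_
    have htb : t ∉ b := fun h =>
      (Finset.notMem_erase t c) (mem_powerset.mp hb h)
    have hLeq : L (insert t b) x = L b x := by
      have hpe : patt (insert t b) x = patt b x := by
        funext v
        simp only [hpatt]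
        by_cases hv : v = t
        · subst hv; simp [htb, hxt]
        · simp [hv]
      simp [hL, hpe]
    have hsf := sign_flip' (c := insert t (c.erase t)) (b := b) (t := t)
      (Finset.mem_insert_self t _) htb
    rw [hLeq, hsf]
    ring
  have prop3 : ∀ x, E ∅ x = 0 := fun x => by simp [hE]
  have hpattuniv : ∀ x, patt Finset.univ x = x := by
    intro x; funext v; simp [hpatt]
  have hpattempty : ∀ x, patt ∅ x = z := by
    intro x; funext v; simp [hpatt]
  have hsumE : ∀ x, ∑ c : Finset V, E c x = Real.log (p z) - Real.log (p x) := by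
    intro x
    have hsplit : ∀ c : Finset V, E c x =
        (if c = ∅ then (∑ b ∈ c.powerset, (-1 : ℝ) ^ (c \ b).card * L b x) else 0)
          - ∑ b ∈ c.powerset, (-1 : ℝ) ^ (c \ b).card * L b x := by
      intro c
      simp only [hE]
      rcases eq_or_ne c ∅ with rfl | hc
      · simp
      · rw [if_neg hc, if_neg hc]; ring
    rw [Finset.sum_congr rfl fun c _ => hsplit c, Finset.sum_sub_distrib]
    have h1 : ∑ c : Finset V,
        (if c = ∅ then (∑ b ∈ c.powerset, (-1 : ℝ) ^ (c \ b).card * L b x) else 0)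
        = L ∅ x := by
      rw [Finset.sum_ite_eq' Finset.univ (∅ : Finset V)
        (fun c => ∑ b ∈ c.powerset, (-1 : ℝ) ^ (c \ b).card * L b x)]
      simp
    have h2 : ∑ c : Finset V, ∑ b ∈ c.powerset, (-1 : ℝ) ^ (c \ b).card * L b x
        = L Finset.univ x := by
      rw [show (Finset.univ : Finset (Finset V)) = (Finset.univ : Finset V).powerset by
        rw [Finset.powerset_univ]]
      exact mobius_sum' Finset.univ (fun b => L b x)
    rw [h1, h2]
    simp [hL, hpattuniv, hpattempty]
  refine ⟨E, ⟨prop1, prop2, prop3, (p z)⁻¹, inv_pos.mpr (hpos z), fun x => ?_⟩, ?_⟩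
  · rw [hsumE x, one_div, inv_inv, neg_sub, Real.exp_sub,
      Real.exp_log (hpos x), Real.exp_log (hpos z), mul_comm,
      div_mul_cancel₀ _ (hpos z).ne']
  · rintro E' ⟨h1a, h1b, h1c, Z', hZ', hrep⟩
    have hrepE : ∀ x, p x = (1 / (p z)⁻¹) * Real.exp (-∑ c : Finset V, E c x) := by
      intro x
      rw [hsumE x, one_div, inv_inv, neg_sub, Real.exp_sub,
        Real.exp_log (hpos x), Real.exp_log (hpos z), mul_comm,
        div_mul_cancel₀ _ (hpos z).ne']
    have hz1 : ∑ c : Finset V, E' c z = 0 := potentials_sum_zero z E' h1b h1c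
    have hz2 : ∑ c : Finset V, E c z = 0 := potentials_sum_zero z E prop2 prop3
    have hZeq : (1 / Z') = p z := by
      have := hrep z
      rw [hz1] at this
      simpa using this.symm
    have hSS : ∀ x, ∑ c : Finset V, E' c x = ∑ c : Finset V, E c x := by
      intro x
      have e1 := hrep x
      rw [hZeq] at e1
      have e2 := hrepE x
      rw [one_div, inv_inv] at e2
      have hmul : p z * Real.exp (-∑ c : Finset V, E' c x)
          = p z * Real.exp (-∑ c : Finset V, E c x) := by rw [← e1, ← e2]
      have hexp := mul_left_cancel₀ (hpos z).ne' hmul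
      have := Real.exp_eq_exp.mp hexp
      linarith
    exact potentials_unique' z E' E h1a h1b h1c prop1 prop2 prop3 hSS
end

section
/- Let p be a strictly positive probability distribution on a finite product space with each factor containing a designated element 0. The unique potentials normalized with respect to zero in the Gibbs representation of p are given by the Möbius inversion formula: E_c(x) = −Σ_{b ⊆ c} (−1)^{|c \ b|} log p(x_b, 0_{V \ b}) where (x_b, 0_{V \ b}) denotes the configuration agreeing with x on b and equal to 0 elsewhere. -/
/-- The configuration `(x_b, 0_{V∖b})` agreeing with `x` on `b` and equal to the
designated element `z` elsewhere. -/
def patch {V : Type*} [DecidableEq V] {X : V → Type*} (z : ∀ v, X v) (b : Finset V)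
    (x : ∀ v, X v) : ∀ v, X v :=
  fun v => if v ∈ b then x v else z v

/-- The Möbius potential
`E_c(x) = −∑_{b ⊆ c} (−1)^{|c∖b|} log p (x_b, 0_{V∖b})`. -/
noncomputable def mobiusE {V : Type*} [DecidableEq V] {X : V → Type*}
    (p : (∀ v, X v) → ℝ) (z : ∀ v, X v) (c : Finset V) (x : ∀ v, X v) : ℝ :=
  -∑ b ∈ c.powerset, (-1 : ℝ) ^ ((c \ b).card) * Real.log (p (patch z b x))

/-!
The alternating sum `∑_{b ⊆ insert a s} (-1)^{|insert a s \ b|} g b` pairs `b` with `insert a b`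
and so equals the same alternating sum over `s` of the difference `g (insert a b) - g b`.
This one identity gives both facts about the potentials: if `x t = z t` with `t ∈ c`, then
`g b = log p (x_b, 0)` does not change when `t` is inserted into `b`, so `E_c x = 0`; and by
induction on `s` it gives Möbius inversion `∑_{c ⊆ s} ∑_{b ⊆ c} (-1)^{|c \ b|} g b = g s`, so the
potentials sum to `-log p x`, of which `E_∅ = -log p 0` is the normalizing constant.
-/

namespace Finset

variable {α R : Type*} [DecidableEq α] [CommRing R]

theorem sum_powerset_insert_neg_one_pow_card_sdiff {s : Finset α} {a : α} (ha : a ∉ s)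
    (g : Finset α → R) :
    ∑ b ∈ (insert a s).powerset, (-1) ^ #(insert a s \ b) * g b =
      ∑ b ∈ s.powerset, (-1) ^ #(s \ b) * (g (insert a b) - g b) := by
  rw [sum_powerset_insert ha, ← sum_add_distrib]
  refine sum_congr rfl fun b hb => ?_
  have hab : a ∉ b := fun h => ha (mem_powerset.1 hb h)
  have hsb : a ∉ s \ b := fun h => ha (mem_sdiff.1 h).1
  rw [insert_sdiff_of_notMem s hab, card_insert_of_notMem hsb, insert_sdiff_insert,
    sdiff_insert_of_notMem ha, pow_succ]
  ring

theorem sum_powerset_neg_one_pow_card_sdiff_eq_zero {s : Finset α} {t : α} (ht : t ∈ s)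
    {g : Finset α → R} (hg : ∀ b ⊆ s.erase t, g (insert t b) = g b) :
    ∑ b ∈ s.powerset, (-1) ^ #(s \ b) * g b = 0 := by
  rw [← insert_erase ht, sum_powerset_insert_neg_one_pow_card_sdiff (notMem_erase t s)]
  exact sum_eq_zero fun b hb => by rw [hg b (mem_powerset.1 hb), sub_self, mul_zero]

theorem sum_powerset_sum_powerset_neg_one_pow_card_sdiff (s : Finset α) (g : Finset α → R) :
    ∑ c ∈ s.powerset, ∑ b ∈ c.powerset, (-1) ^ #(c \ b) * g b = g s := by
  induction s using Finset.induction_on generalizing g with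
  | empty => simp
  | insert a s ha ih =>
    have hinsert : ∀ c ∈ s.powerset,
        ∑ b ∈ (insert a c).powerset, (-1) ^ #(insert a c \ b) * g b =
          ∑ b ∈ c.powerset, (-1) ^ #(c \ b) * g (insert a b) -
            ∑ b ∈ c.powerset, (-1) ^ #(c \ b) * g b := fun c hc => by
      rw [sum_powerset_insert_neg_one_pow_card_sdiff fun h => ha (mem_powerset.1 hc h),
        ← sum_sub_distrib]
      simp only [mul_sub]
    rw [sum_powerset_insert ha, sum_congr rfl hinsert, sum_sub_distrib, ih, ih]
    ring

end Finset

section Potentials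

variable {V : Type*} [DecidableEq V] {X : V → Type*} {z : ∀ v, X v}

theorem patch_congr {b : Finset V} {x y : ∀ v, X v} (h : ∀ v ∈ b, x v = y v) :
    patch z b x = patch z b y := by
  funext v
  by_cases hv : v ∈ b <;> simp [patch, hv, h]

theorem patch_insert_of_eq {b : Finset V} {x : ∀ v, X v} {t : V} (ht : x t = z t) :
    patch z (insert t b) x = patch z b x := by
  funext v
  by_cases hv : v = t
  · subst hv
    simp [patch, ht]
  · simp [patch, hv]

@[simp]
theorem patch_empty (x : ∀ v, X v) : patch z ∅ x = z := by
  funext v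
  simp [patch]

@[simp]
theorem patch_univ [Fintype V] (x : ∀ v, X v) : patch z Finset.univ x = x := by
  funext v
  simp [patch]

variable (p : (∀ v, X v) → ℝ)

theorem mobiusE_congr {c : Finset V} {x y : ∀ v, X v} (h : ∀ v ∈ c, x v = y v) :
    mobiusE p z c x = mobiusE p z c y := by
  unfold mobiusE
  refine congrArg _ (Finset.sum_congr rfl fun b hb => ?_)
  rw [patch_congr fun v hv => h v (Finset.mem_powerset.1 hb hv)]

theorem mobiusE_eq_zero_of_mem {c : Finset V} {x : ∀ v, X v} {t : V} (htc : t ∈ c)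
    (ht : x t = z t) : mobiusE p z c x = 0 := by
  rw [mobiusE, neg_eq_zero]
  exact Finset.sum_powerset_neg_one_pow_card_sdiff_eq_zero htc fun b _ => by
    rw [patch_insert_of_eq ht]

@[simp]
theorem mobiusE_empty (x : ∀ v, X v) : mobiusE p z ∅ x = -Real.log (p z) := by
  simp [mobiusE]

theorem sum_mobiusE [Fintype V] (x : ∀ v, X v) :
    ∑ c, mobiusE p z c x = -Real.log (p x) := by
  simp only [mobiusE, Finset.sum_neg_distrib]
  rw [← Finset.powerset_univ, Finset.sum_powerset_sum_powerset_neg_one_pow_card_sdiff,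
    patch_univ]

end Potentials

theorem mobius_potentials_normalized_representation_general
    {V : Type*} [Fintype V] [DecidableEq V] (X : V → Type*)
    (z : ∀ v, X v) (p : (∀ v, X v) → ℝ)
    (hpos : ∀ x, 0 < p x) :
    (∀ (c : Finset V) (x y : ∀ v, X v), (∀ v ∈ c, x v = y v) →
        mobiusE p z c x = mobiusE p z c y) ∧
    (∀ (c : Finset V) (x : ∀ v, X v), (∃ t ∈ c, x t = z t) → mobiusE p z c x = 0) ∧
    (∀ x, p x = (1 / (1 / p z)) *
        Real.exp (-∑ c ∈ Finset.univ.filter (fun c : Finset V => c ≠ ∅),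
          mobiusE p z c x)) := by
  refine ⟨fun c x y => mobiusE_congr p, fun c x ⟨t, htc, ht⟩ => mobiusE_eq_zero_of_mem p htc ht,
    fun x => ?_⟩
  have hnonempty : ∑ c ∈ Finset.univ.filter (fun c : Finset V => c ≠ ∅), mobiusE p z c x =
      Real.log (p z) - Real.log (p x) := by
    rw [Finset.filter_ne', Finset.sum_erase_eq_sub (Finset.mem_univ _), sum_mobiusE,
      mobiusE_empty]
    ring
  rw [hnonempty, neg_sub, Real.exp_sub, Real.exp_log (hpos x), Real.exp_log (hpos z)]
  field_simp [(hpos z).ne']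

/-- The Möbius inversion formula yields potentials that depend only on the
coordinates in `c`, are normalized with respect to zero, and give the Gibbs
representation `p x = (1/Z) exp (−∑_{c ≠ ∅} E_c x)` with `Z = 1 / p(0)`. -/
theorem mobius_potentials_normalized_representation
    {V : Type*} [Fintype V] [DecidableEq V] (X : V → Type*) [∀ v, Fintype (X v)]
    (z : ∀ v, X v) (p : (∀ v, X v) → ℝ)
    (hpos : ∀ x, 0 < p x) (hsum : ∑ x, p x = 1) :
    (∀ (c : Finset V) (x y : ∀ v, X v), (∀ v ∈ c, x v = y v) →
        mobiusE p z c x = mobiusE p z c y) ∧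
    (∀ (c : Finset V) (x : ∀ v, X v), (∃ t ∈ c, x t = z t) → mobiusE p z c x = 0) ∧
    (∀ x, p x = (1 / (1 / p z)) *
        Real.exp (-∑ c ∈ Finset.univ.filter (fun c : Finset V => c ≠ ∅),
          mobiusE p z c x)) :=
  mobius_potentials_normalized_representation_general X z p hpos
end

section
/- Let p(x) = (1/Z) exp(−Σ_{c ∈ C} E_c(x_c)) be a Gibbs distribution on finite variables indexed by V with potentials normalized with respect to zero, where each clique c with nonzero potential is a clique of graph G. Let A ⊆ V and q a clique with q ⊆ A. If A satisfies the Strong LAP condition for q in G, then in the unique zero-normalized Gibbs representation of the marginal distribution p_A(x_A) = Σ_{x_{V\A}} p(x), the potential for q equals E_q. -/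
/-- The Strong LAP condition for a clique `q` and a set `A` with `q ⊆ A`. -/
def StrongLAP {V : Type*} (G : SimpleGraph V) (A q : Set V) : Prop :=
  q ⊆ A ∧ ∃ i ∈ q, ∃ j ∈ q, i ≠ j ∧ ¬ RelPathConn G A i j

/-!
Apply the inclusion–exclusion (Möbius) functional
`f ↦ ∑_{s ⊆ q} (-1)^{|q \ s|} f(x_s, z_{V \ s})` to `-log p_A`. On a zero-normalized Gibbs
energy `∑ c, H c` it returns `H q x`. Summing out `V \ A` gives
`-log p_A = const + ∑_{c ⊆ A} E c - log T`, where `T` is the partition function of the cliques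
leaving `A`. Let `R` be the set of vertices reachable from `i` through `V \ A`. A clique with
nonzero potential that meets `R \ A` cannot contain `j`, since otherwise `i` and `j` would be path
connected with respect to `V \ A`; a clique that leaves `A` but misses `R` cannot contain `i`.
The outside variables in `R` and outside `R` are thus summed independently, so
`log T` is a function blind to `x j` plus a function blind to `x i`, and the functional kills
both because `i, j ∈ q`.
-/

open Finset

section Moebius

variable {V : Type*} [DecidableEq V] {X : V → Type*}

def moebiusCoeff (q : Finset V) (z x : ∀ v, X v) : ((∀ v, X v) → ℝ) →ₗ[ℝ] ℝ :=
  ∑ s ∈ q.powerset, (-1 : ℝ) ^ #(q \ s) • LinearMap.proj (s.piecewise x z)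

lemma moebiusCoeff_apply (q : Finset V) (z x : ∀ v, X v) (f : (∀ v, X v) → ℝ) :
    moebiusCoeff q z x f = ∑ s ∈ q.powerset, (-1 : ℝ) ^ #(q \ s) * f (s.piecewise x z) := by
  simp [moebiusCoeff]

lemma moebiusCoeff_eq_zero_of_dependsOn {q : Finset V} {k : V} (hk : k ∈ q)
    {z x : ∀ v, X v} {f : (∀ v, X v) → ℝ} (hf : DependsOn f {k}ᶜ) :
    moebiusCoeff q z x f = 0 := by
  -- pair `t ∌ k` with `insert k t`: equal values of `f`, opposite signs
  rw [moebiusCoeff_apply, ← insert_erase hk, sum_powerset_insert (notMem_erase k q),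
    ← sum_add_distrib]
  refine sum_eq_zero fun t ht => ?_
  have htq : t ⊆ q.erase k := mem_powerset.1 ht
  have hkt : k ∉ t := fun h => notMem_erase k q (htq h)
  have hcard : #(insert k (q.erase k) \ t) = #(insert k (q.erase k) \ insert k t) + 1 := by
    have := card_le_card htq
    rw [card_sdiff_of_subset (htq.trans (subset_insert _ _)),
      card_sdiff_of_subset (insert_subset_insert k htq), card_insert_of_notMem (notMem_erase k q),
      card_insert_of_notMem hkt]
    omega
  have hft : f ((insert k t).piecewise x z) = f (t.piecewise x z) := hf fun v hv => by
    simp [piecewise, Set.mem_compl_singleton_iff.1 hv]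
  rw [hcard, hft, pow_succ]
  ring

lemma moebiusCoeff_of_normalized {q c : Finset V} {z x : ∀ v, X v} {h : (∀ v, X v) → ℝ}
    (hloc : DependsOn h c) (hnorm : ∀ y, (∃ t ∈ c, y t = z t) → h y = 0) :
    moebiusCoeff q z x h = if c = q then h x else 0 := by
  rw [moebiusCoeff_apply]
  split_ifs with hcq
  · subst hcq
    rw [sum_eq_single_of_mem c (mem_powerset_self c), sdiff_self, bot_eq_empty, card_empty,
      pow_zero, one_mul]
    · exact hloc fun v hv => piecewise_eq_of_mem _ _ _ hv
    · intro s hs hsc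
      obtain ⟨t, htc, hts⟩ :=
        exists_of_ssubset (ssubset_of_subset_of_ne (mem_powerset.1 hs) hsc)
      rw [hnorm _ ⟨t, htc, piecewise_eq_of_notMem _ _ _ hts⟩, mul_zero]
  by_cases hc : c ⊆ q
  · obtain ⟨k, hkq, hkc⟩ := exists_of_ssubset (ssubset_of_subset_of_ne hc hcq)
    rw [← moebiusCoeff_apply]
    exact moebiusCoeff_eq_zero_of_dependsOn hkq (hloc.mono (by simpa using hkc))
  · obtain ⟨t, htc, htq⟩ := not_subset.1 hc
    refine sum_eq_zero fun s hs => ?_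
    rw [hnorm _ ⟨t, htc, piecewise_eq_of_notMem _ _ _ fun h => htq (mem_powerset.1 hs h)⟩,
      mul_zero]

lemma moebiusCoeff_sum_of_normalized {q : Finset V} {𝒞 : Finset (Finset V)} (hq : q ∈ 𝒞)
    {z x : ∀ v, X v} {H : Finset V → (∀ v, X v) → ℝ}
    (hloc : ∀ c : Finset V, DependsOn (H c) c)
    (hnorm : ∀ c y, (∃ t ∈ c, y t = z t) → H c y = 0) :
    moebiusCoeff q z x (∑ c ∈ 𝒞, H c) = H q x := by
  simp_rw [map_sum, moebiusCoeff_of_normalized (hloc _) (hnorm _), sum_ite_eq_of_mem' _ _ _ hq]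

end Moebius

namespace SimpleGraph

variable {V : Type*} {G : SimpleGraph V}

lemma Walk.tail_support_concat {u v w : V} (p : G.Walk u v) (h : G.Adj v w) :
    (p.concat h).support.tail = p.support.tail ++ [w] := by
  rw [concat_eq_append, tail_support_append]
  rfl

lemma Walk.tail_support_bypass_subset [DecidableEq V] {u v : V} (p : G.Walk u v) :
    p.bypass.support.tail ⊆ p.support.tail := by
  intro x hx
  have hxu : x ≠ u := by
    rintro rfl
    have := p.bypass_isPath.support_nodup
    rw [← cons_tail_support] at this
    exact (List.nodup_cons.1 this).1 hx
  have hxp := p.support_bypass_subset_support (List.mem_of_mem_tail hx)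
  exact (p.mem_support_iff.1 hxp).resolve_left hxu

variable (G) (A : Set V)

def ReachOutside (i v : V) : Prop :=
  ∃ w : G.Walk i v, ∀ u ∈ w.support.tail, u ∉ A

variable {G A}

lemma ReachOutside.refl (i : V) : ReachOutside G A i i := ⟨.nil, by simp⟩

lemma ReachOutside.concat {i b v : V} (h : ReachOutside G A i b) (hv : v ∉ A) (hbv : G.Adj b v) :
    ReachOutside G A i v := by
  obtain ⟨w, hw⟩ := h
  refine ⟨w.concat hbv, fun u hu => ?_⟩
  rw [Walk.tail_support_concat, List.mem_append, List.mem_singleton] at hu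
  exact hu.elim (hw u) (· ▸ hv)

lemma ReachOutside.relPathConn {i b j : V} (h : ReachOutside G A i b) (hi : i ∈ A) (hb : b ∉ A)
    (hj : j ∈ A) (hji : j ≠ i) (hbj : G.Adj b j) : RelPathConn G A i j := by
  classical
  obtain ⟨w, hw⟩ := h
  have hpA : ∀ u ∈ w.bypass.support.tail, u ∉ A :=
    fun u hu => hw u (w.tail_support_bypass_subset hu)
  have hjp : j ∉ w.bypass.support := fun hj' =>
    ((w.bypass.mem_support_iff).1 hj').elim hji fun h => hpA j h hj
  have hdrop : (w.bypass.concat hbj).support.tail.dropLast = w.bypass.support.tail := by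
    rw [Walk.tail_support_concat, List.dropLast_concat]
  refine ⟨w.bypass.concat hbj, w.bypass_isPath.concat hjp hbj, ?_, hdrop ▸ hpA⟩
  rw [hdrop, ← Walk.support_tail_of_not_nil _ (Walk.not_nil_of_ne fun h : i = b => hb (h ▸ hi))]
  exact Walk.support_ne_nil _

lemma IsClique.subset_union_reachOutside {c : Set V} (hc : G.IsClique c) {i b : V} (hbc : b ∈ c)
    (hb : G.ReachOutside A i b) : c ⊆ A ∪ {v | G.ReachOutside A i v} := by
  intro v hv
  by_cases hvA : v ∈ A
  · exact Or.inl hvA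
  rcases eq_or_ne b v with rfl | hbv
  · exact Or.inr hb
  · exact Or.inr (hb.concat hvA (hc hbc hv hbv))

lemma IsClique.notMem_of_reachOutside {c : Set V} (hc : G.IsClique c) {i b j : V} (hbc : b ∈ c)
    (hbA : b ∉ A) (hb : G.ReachOutside A i b) (hi : i ∈ A) (hj : j ∈ A) (hji : j ≠ i)
    (hconn : ¬ RelPathConn G A i j) : j ∉ c := fun hjc =>
  hconn (hb.relPathConn hi hbA hj hji (hc hbc hjc fun h => hbA (h ▸ hj)))

lemma IsClique.reachOutside_of_mem {c : Set V} (hc : G.IsClique c) {i b : V} (hic : i ∈ c)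
    (hbc : b ∈ c) (hbA : b ∉ A) : G.ReachOutside A i b := by
  rcases eq_or_ne i b with rfl | hib
  · exact .refl i
  · exact (ReachOutside.refl i).concat hbA (hc hic hbc hib)

end SimpleGraph

lemma Fintype.sum_mul_sum_eq_card_nsmul_sum_of_dependsOn {ι R : Type*} [Fintype ι]
    [DecidableEq ι] {β : ι → Type*} [∀ i, Fintype (β i)] [CommSemiring R] (S : Set ι)
    [DecidablePred (· ∈ S)]
    {f g : (∀ i, β i) → R} (hf : DependsOn f S) (hg : DependsOn g Sᶜ) :
    (∑ a, f a) * ∑ b, g b = Fintype.card (∀ i, β i) • ∑ a, f a * g a := by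
  have hswap : Function.Involutive
      fun p : (∀ i, β i) × (∀ i, β i) => (S.piecewise p.1 p.2, S.piecewise p.2 p.1) := by
    intro p
    ext i <;> by_cases hi : i ∈ S <;> simp [hi]
  calc (∑ a, f a) * ∑ b, g b = ∑ p : (∀ i, β i) × (∀ i, β i), f p.1 * g p.2 := by
        rw [sum_mul_sum, Fintype.sum_prod_type]
    _ = ∑ p : (∀ i, β i) × (∀ i, β i), (f * g) (S.piecewise p.1 p.2) := by
        refine Fintype.sum_congr _ _ fun p => ?_
        rw [Pi.mul_apply, hf fun i hi => (S.piecewise_eq_of_mem _ _ hi).symm,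
          hg fun i hi => (S.piecewise_eq_of_notMem _ _ hi).symm]
    _ = ∑ p : (∀ i, β i) × (∀ i, β i), (f * g) p.1 :=
        Equiv.sum_comp hswap.toPerm fun p => (f * g) p.1
    _ = Fintype.card (∀ i, β i) • ∑ a, f a * g a := by
        simp [Fintype.sum_prod_type, sum_const, card_univ, smul_sum]

section OuterPartitionFn

variable {V : Type*} [DecidableEq V] {X : V → Type*}

def glue (A : Finset V) (u : ∀ v, X v) (b : ∀ w : {w // w ∉ A}, X w) : ∀ v, X v :=
  fun v => if h : v ∈ A then u v else b ⟨v, h⟩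

lemma dependsOn_glue_left {β : Type*} {f : (∀ v, X v) → β} {T : Set V} (hf : DependsOn f T)
    (A : Finset V) (b : ∀ w : {w // w ∉ A}, X w) : DependsOn (fun u => f (glue A u b)) T :=
  fun _ _ h => hf fun v hv => by unfold glue; split_ifs <;> simp [h v hv]

lemma dependsOn_glue_right {β : Type*} {A : Finset V} {f : (∀ v, X v) → β} {T : Set V}
    (hf : DependsOn f (↑A ∪ T)) (u : ∀ v, X v) :
    DependsOn (fun b => f (glue A u b)) {w | w.1 ∈ T} := fun _ _ h => hf fun v hv => by
  unfold glue
  split_ifs with hvA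
  · rfl
  · exact h ⟨v, hvA⟩ (hv.resolve_left hvA)

lemma sum_ite_forall_eq_eq_sum_glue [∀ v, DecidableEq (X v)] [Fintype V] [∀ v, Fintype (X v)]
    {M : Type*} [AddCommMonoid M] (A : Finset V) (f : (∀ v, X v) → M) (u : ∀ v, X v) :
    (∑ y, if ∀ v ∈ A, y v = u v then f y else 0) = ∑ b, f (glue A u b) := by
  rw [← sum_filter]
  refine (sum_nbij' (glue A u) (fun y w => y w) ?_ ?_ ?_ ?_ fun _ _ => rfl).symm
  · simp +contextual [glue]
  · simp
  · intro b _
    funext w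
    simp [glue, w.2]
  · intro y hy
    funext v
    by_cases hv : v ∈ A <;> simp_all [glue]

variable [Fintype V] [∀ v, Fintype (X v)]

noncomputable def outerPartitionFn (A : Finset V) (E : Finset V → (∀ v, X v) → ℝ)
    (𝒞 : Finset (Finset V)) (u : ∀ v, X v) : ℝ :=
  ∑ b : ∀ w : {w // w ∉ A}, X w, Real.exp (-∑ c ∈ 𝒞, E c (glue A u b))

variable {A : Finset V} {E : Finset V → (∀ v, X v) → ℝ} {𝒞 : Finset (Finset V)}

lemma outerPartitionFn_pos [∀ v, Nonempty (X v)] (u : ∀ v, X v) :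
    0 < outerPartitionFn A E 𝒞 u :=
  sum_pos (fun _ _ => Real.exp_pos _) univ_nonempty

lemma outerPartitionFn_dependsOn {T : Set V} (h : ∀ c ∈ 𝒞, DependsOn (E c) T) :
    DependsOn (outerPartitionFn A E 𝒞) T := fun _ _ huu =>
  sum_congr rfl fun b _ => congrArg (fun s => Real.exp (-s)) <|
    sum_congr rfl fun c hc => dependsOn_glue_left (h c hc) A b huu

lemma outerPartitionFn_filter_mul_filter_not (P : Finset V → Prop) [DecidablePred P] (T : Set V)
    [DecidablePred (· ∈ T)] (hP : ∀ c ∈ 𝒞, P c → DependsOn (E c) (↑A ∪ T))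
    (hnP : ∀ c ∈ 𝒞, ¬ P c → DependsOn (E c) (↑A ∪ Tᶜ)) (u : ∀ v, X v) :
    outerPartitionFn A E (𝒞.filter P) u * outerPartitionFn A E (𝒞.filter (¬ P ·)) u =
      Fintype.card (∀ w : {w // w ∉ A}, X w) • outerPartitionFn A E 𝒞 u := by
  have hdep : ∀ {𝒞' : Finset (Finset V)} {T' : Set V},
      (∀ c ∈ 𝒞', DependsOn (E c) (↑A ∪ T')) →
      DependsOn (fun b => Real.exp (-∑ c ∈ 𝒞', E c (glue A u b))) {w | w.1 ∈ T'} :=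
    fun h b b' hbb => congrArg (fun s => Real.exp (-s)) <|
      sum_congr rfl fun c hc => dependsOn_glue_right (h c hc) u hbb
  rw [outerPartitionFn, outerPartitionFn, Fintype.sum_mul_sum_eq_card_nsmul_sum_of_dependsOn
    {w | w.1 ∈ T} (hdep fun c hc => hP c (mem_filter.1 hc).1 (mem_filter.1 hc).2)
    (hdep fun c hc => hnP c (mem_filter.1 hc).1 (mem_filter.1 hc).2), outerPartitionFn]
  simp_rw [← Real.exp_add, ← neg_add, sum_filter_add_sum_filter_not]

lemma marginal_eq_mul_outerPartitionFn [∀ v, DecidableEq (X v)]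
    (hE : ∀ c : Finset V, DependsOn (E c) c) {Z : ℝ} {p : (∀ v, X v) → ℝ}
    (hp : ∀ x, p x = 1 / Z * Real.exp (-∑ c : Finset V, E c x)) (A : Finset V)
    (u : ∀ v, X v) :
    (∑ y, if ∀ v ∈ A, y v = u v then p y else 0) =
      1 / Z * Real.exp (-∑ c ∈ univ.filter (· ⊆ A), E c u) *
        outerPartitionFn A E (univ.filter (¬ · ⊆ A)) u := by
  rw [sum_ite_forall_eq_eq_sum_glue, outerPartitionFn, mul_sum]
  refine sum_congr rfl fun b _ => ?_
  have hA : ∑ c ∈ univ.filter (· ⊆ A), E c (glue A u b) =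
      ∑ c ∈ univ.filter (· ⊆ A), E c u :=
    sum_congr rfl fun c hc => hE c fun v hv => dif_pos ((mem_filter.1 hc).2 hv)
  rw [hp, ← sum_filter_add_sum_filter_not univ (· ⊆ A), neg_add, Real.exp_add, hA, mul_assoc]

end OuterPartitionFn

section StrongLAP

variable {V : Type*} [Fintype V] [DecidableEq V] {X : V → Type*} [∀ v, Fintype (X v)]
  {G : SimpleGraph V} {E : Finset V → (∀ v, X v) → ℝ}

lemma dependsOn_of_isClique (hEloc : ∀ c : Finset V, DependsOn (E c) c)
    (hEclique : ∀ c : Finset V, (∃ x, E c x ≠ 0) → G.IsClique (c : Set V)) {c : Finset V}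
    {T : Set V} (hT : G.IsClique (c : Set V) → (c : Set V) ⊆ T) : DependsOn (E c) T := by
  by_cases hc : ∃ x, E c x ≠ 0
  · exact (hEloc c).mono (hT (hEclique c hc))
  · rw [not_exists_not] at hc
    exact fun x y _ => by rw [hc x, hc y]

lemma exists_log_outerPartitionFn_eq_add [∀ v, Nonempty (X v)]
    (hEloc : ∀ c : Finset V, DependsOn (E c) c)
    (hEclique : ∀ c : Finset V, (∃ x, E c x ≠ 0) → G.IsClique (c : Set V)) {A : Finset V}
    {i j : V} (hi : i ∈ A) (hj : j ∈ A) (hij : i ≠ j) (hconn : ¬ RelPathConn G A i j) :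
    ∃ g h : (∀ v, X v) → ℝ, DependsOn g {j}ᶜ ∧ DependsOn h {i}ᶜ ∧
      Real.log ∘ outerPartitionFn A E (univ.filter (¬ · ⊆ A)) = g + h := by
  classical
  set R := {v | G.ReachOutside A i v}
  set 𝒞 := univ.filter fun c : Finset V => ¬ c ⊆ A
  set P : Finset V → Prop := fun c => ∃ b ∈ c, b ∉ A ∧ b ∈ R
  have hP : ∀ c, P c → G.IsClique (c : Set V) → (c : Set V) ⊆ ↑A ∪ R ∧ j ∉ c :=
    fun c ⟨_, hbc, hbA, hb⟩ hcl => ⟨hcl.subset_union_reachOutside hbc hb,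
      hcl.notMem_of_reachOutside hbc hbA hb hi hj hij.symm hconn⟩
  have hnP :
      ∀ c ∈ 𝒞, ¬ P c → G.IsClique (c : Set V) → (c : Set V) ⊆ ↑A ∪ Rᶜ ∧ i ∉ c := by
    intro c hc hPc hcl
    refine ⟨fun v hv => or_iff_not_imp_left.2 fun hvA hvR => hPc ⟨v, hv, hvA, hvR⟩,
      fun hic => ?_⟩
    obtain ⟨b, hbc, hbA⟩ := not_subset.1 (mem_filter.1 hc).2
    exact hPc ⟨b, hbc, hbA, hcl.reachOutside_of_mem hic hbc hbA⟩
  set T₁ := outerPartitionFn A E (𝒞.filter P)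
  set T₂ := outerPartitionFn A E (𝒞.filter (¬ P ·))
  have hT₁ : DependsOn T₁ {j}ᶜ := outerPartitionFn_dependsOn fun c hc =>
    dependsOn_of_isClique hEloc hEclique fun hcl => by
      simpa using (hP c (mem_filter.1 hc).2 hcl).2
  have hT₂ : DependsOn T₂ {i}ᶜ := outerPartitionFn_dependsOn fun c hc =>
    dependsOn_of_isClique hEloc hEclique fun hcl => by
      simpa using (hnP c (mem_filter.1 hc).1 (mem_filter.1 hc).2 hcl).2
  set N := Fintype.card (∀ w : {w // w ∉ A}, X w)
  refine ⟨fun u => Real.log (T₁ u) - Real.log N, fun u => Real.log (T₂ u),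
    fun _ _ h => congrArg (Real.log · - Real.log N) (hT₁ h),
    fun _ _ h => congrArg Real.log (hT₂ h), funext fun u => ?_⟩
  have hfac := outerPartitionFn_filter_mul_filter_not P R
    (fun c _ hc => dependsOn_of_isClique hEloc hEclique fun hcl => (hP c hc hcl).1)
    (fun c hc hnc => dependsOn_of_isClique hEloc hEclique fun hcl => (hnP c hc hnc hcl).1) u
  rw [nsmul_eq_mul] at hfac
  have hlog := congrArg Real.log hfac
  rw [Real.log_mul (outerPartitionFn_pos u).ne' (outerPartitionFn_pos u).ne',
    Real.log_mul (Nat.cast_pos.2 Fintype.card_pos).ne' (outerPartitionFn_pos u).ne'] at hlog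
  simp only [Function.comp_apply, Pi.add_apply]
  linarith

end StrongLAP

theorem strongLAP_marginal_potential_general
    {V : Type*} [Fintype V] [DecidableEq V] (X : V → Type*) [∀ v, Fintype (X v)]
    [∀ v, DecidableEq (X v)] (z : ∀ v, X v) (G : SimpleGraph V)
    (E : Finset V → (∀ v, X v) → ℝ)
    (hEloc : ∀ c x y, (∀ v ∈ c, x v = y v) → E c x = E c y)
    (hEnorm : ∀ (c : Finset V) x, (∃ t ∈ c, x t = z t) → E c x = 0)
    (hEclique : ∀ c : Finset V, (∃ x, E c x ≠ 0) → G.IsClique (c : Set V))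
    (Z : ℝ) (hZ : 0 < Z) (p : (∀ v, X v) → ℝ)
    (hp : ∀ x, p x = (1 / Z) * Real.exp (-∑ c : Finset V, E c x))
    (A q : Finset V) (hqA : q ⊆ A)
    (hlap : StrongLAP G (A : Set V) (q : Set V))
    (F : Finset V → (∀ v, X v) → ℝ)
    (hFloc : ∀ c x y, (∀ v ∈ c, x v = y v) → F c x = F c y)
    (hFnorm : ∀ (c : Finset V) x, (∃ t ∈ c, x t = z t) → F c x = 0)
    (Z' : ℝ) (hZ' : 0 < Z')
    (hrep : ∀ x, (∑ y : ∀ v, X v, if ∀ v ∈ A, y v = x v then p y else 0) =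
        (1 / Z') * Real.exp (-∑ c : Finset V, F c x)) :
    F q = E q := by
  obtain ⟨-, i, hi, j, hj, hij, hconn⟩ := hlap
  have (v : V) : Nonempty (X v) := ⟨z v⟩
  have hE : ∀ c : Finset V, DependsOn (E c) c := fun c _ _ h => hEloc c _ _ h
  obtain ⟨g, h, hg, hh, hlogT⟩ :=
    exists_log_outerPartitionFn_eq_add hE hEclique (hqA hi) (hqA hj) hij hconn
  have hF : ∑ c, F c =
      (fun _ => Real.log Z - Real.log Z') + ∑ c ∈ univ.filter (· ⊆ A), E c -
        Real.log ∘ outerPartitionFn A E (univ.filter (¬ · ⊆ A)) := funext fun u => by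
    have hlog := congrArg Real.log <|
      (marginal_eq_mul_outerPartitionFn hE hp A u).symm.trans (hrep u)
    rw [Real.log_mul (by positivity) (outerPartitionFn_pos u).ne', Real.log_mul (by positivity)
      (Real.exp_pos _).ne', Real.log_mul (by positivity) (Real.exp_pos _).ne', Real.log_exp,
      Real.log_exp, one_div, one_div, Real.log_inv, Real.log_inv] at hlog
    simp only [Pi.add_apply, Pi.sub_apply, Finset.sum_apply, Function.comp_apply]
    linarith
  funext x
  have hq := congrArg (moebiusCoeff q z x) hF
  rw [moebiusCoeff_sum_of_normalized (mem_univ q) (fun c _ _ h => hFloc c _ _ h) hFnorm, map_sub,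
    map_add, moebiusCoeff_sum_of_normalized (mem_filter.2 ⟨mem_univ q, hqA⟩) hE hEnorm, hlogT,
    map_add, moebiusCoeff_eq_zero_of_dependsOn hj hg, moebiusCoeff_eq_zero_of_dependsOn hi hh,
    moebiusCoeff_eq_zero_of_dependsOn hi ((dependsOn_const _).mono (Set.empty_subset _))] at hq
  linarith

/-- Let `p` be a Gibbs distribution with zero-normalized potentials `E` whose
support cliques are cliques of `G`, let `q ⊆ A` be a clique, and suppose `A`
satisfies the Strong LAP condition for `q`.  Then in any zero-normalized Gibbs
representation `F` of the marginal of `p` over `A`, the potential for `q` equals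
`E q`. -/
theorem strongLAP_marginal_potential
    {V : Type*} [Fintype V] [DecidableEq V] (X : V → Type*) [∀ v, Fintype (X v)]
    [∀ v, DecidableEq (X v)] (z : ∀ v, X v) (G : SimpleGraph V)
    (E : Finset V → (∀ v, X v) → ℝ)
    (hEloc : ∀ c x y, (∀ v ∈ c, x v = y v) → E c x = E c y)
    (hEnorm : ∀ (c : Finset V) x, (∃ t ∈ c, x t = z t) → E c x = 0)
    (hEclique : ∀ c : Finset V, (∃ x, E c x ≠ 0) → G.IsClique (c : Set V))
    (Z : ℝ) (hZ : 0 < Z) (p : (∀ v, X v) → ℝ)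
    (hp : ∀ x, p x = (1 / Z) * Real.exp (-∑ c : Finset V, E c x))
    (hsum : ∑ x, p x = 1)
    (A q : Finset V) (hq : G.IsClique (q : Set V)) (hqA : q ⊆ A)
    (hlap : StrongLAP G (A : Set V) (q : Set V))
    (F : Finset V → (∀ v, X v) → ℝ)
    (hFloc : ∀ c x y, (∀ v ∈ c, x v = y v) → F c x = F c y)
    (hFnorm : ∀ (c : Finset V) x, (∃ t ∈ c, x t = z t) → F c x = 0)
    (hFsupp : ∀ c : Finset V, ¬ c ⊆ A → ∀ x, F c x = 0)
    (Z' : ℝ) (hZ' : 0 < Z')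
    (hrep : ∀ x, (∑ y : ∀ v, X v, if ∀ v ∈ A, y v = x v then p y else 0) =
        (1 / Z') * Real.exp (-∑ c : Finset V, F c x)) :
    F q = E q :=
  strongLAP_marginal_potential_general X z G E hEloc hEnorm hEclique Z hZ p hp A q hqA hlap F hFloc
    hFnorm Z' hZ' hrep
end

section
/- A strictly positive conditional distribution p(x_j | x_{A \ {j}}) arising from a strictly positive joint distribution on a finite product space admits a Gibbs representation with potentials normalized with respect to zero, and the clique potential for any clique q containing j in this representation is unique (i.e., any two zero-normalized representations of the conditional assign equal potential to q). -/
open Finset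

lemma pair_cancel {A : Type*} [DecidableEq A] (c : Finset A) (t : A) (ht : t ∈ c)
    (v : Finset A → ℝ) (hv : ∀ b ⊆ c.erase t, v (insert t b) = v b) :
    ∑ b ∈ c.powerset, (-1:ℝ)^(c.card - b.card) * v b = 0 := by
  have htc : t ∉ c.erase t := notMem_erase t c
  have hc : c = insert t (c.erase t) := (insert_erase ht).symm
  rw [hc, Finset.sum_powerset_insert htc]
  have hcard : (insert t (c.erase t)).card = (c.erase t).card + 1 :=
    card_insert_of_notMem htc
  rw [← Finset.sum_add_distrib]
  apply Finset.sum_eq_zero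
  intro b hb
  rw [mem_powerset] at hb
  have htb : t ∉ b := fun h => htc (hb h)
  have hb1 : (insert t b).card = b.card + 1 := card_insert_of_notMem htb
  have hble : b.card ≤ (c.erase t).card := card_le_card hb
  rw [hv b hb, hcard, hb1]
  have h1 : (c.erase t).card + 1 - b.card = ((c.erase t).card - b.card) + 1 := by omega
  have h2 : (c.erase t).card + 1 - (b.card + 1) = (c.erase t).card - b.card := by omega
  rw [h1, h2, pow_succ]
  ring

lemma mobiusA {A : Type*} [DecidableEq A] (s : Finset A) (v : Finset A → ℝ) :
    ∑ c ∈ s.powerset, ∑ b ∈ c.powerset, (-1:ℝ)^(c.card - b.card) * v b = v s := by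
  induction s using Finset.induction_on generalizing v with
  | empty => simp
  | @insert a s ha ih =>
    rw [Finset.sum_powerset_insert ha]
    have key : ∀ c ∈ s.powerset,
        ∑ b ∈ (insert a c).powerset, (-1:ℝ)^((insert a c).card - b.card) * v b
        = -(∑ b ∈ c.powerset, (-1:ℝ)^(c.card - b.card) * v b)
          + ∑ b ∈ c.powerset, (-1:ℝ)^(c.card - b.card) * v (insert a b) := by
      intro c hc
      rw [mem_powerset] at hc
      have hac : a ∉ c := fun h => ha (hc h)
      rw [Finset.sum_powerset_insert hac]
      have hcc : (insert a c).card = c.card + 1 := card_insert_of_notMem hac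
      congr 1
      · rw [eq_comm, neg_eq_iff_eq_neg, ← Finset.sum_neg_distrib]
        apply Finset.sum_congr rfl
        intro b hb
        rw [mem_powerset] at hb
        have : c.card + 1 - b.card = (c.card - b.card) + 1 := by
          have := card_le_card hb; omega
        rw [hcc, this, pow_succ]; ring
      · apply Finset.sum_congr rfl
        intro b hb
        rw [mem_powerset] at hb
        have hab : a ∉ b := fun h => hac (hb h)
        have : (insert a b).card = b.card + 1 := card_insert_of_notMem hab
        rw [hcc, this]
        congr 2
        have := card_le_card hb; omega
    rw [Finset.sum_congr rfl key, Finset.sum_add_distrib, Finset.sum_neg_distrib,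
      ih v, ih (fun b => v (insert a b))]
    ring

lemma mobiusB {A : Type*} [DecidableEq A] (q : Finset A) (u : Finset A → ℝ) :
    ∑ b ∈ q.powerset, (-1:ℝ)^(q.card - b.card) * ∑ c ∈ b.powerset, u c = u q := by
  induction q using Finset.induction_on generalizing u with
  | empty => simp
  | @insert a s ha ih =>
    rw [Finset.sum_powerset_insert ha]
    have hsc : (insert a s).card = s.card + 1 := card_insert_of_notMem ha
    have key1 : ∑ b ∈ s.powerset, (-1:ℝ)^((insert a s).card - b.card) * ∑ c ∈ b.powerset, u c
        = -∑ b ∈ s.powerset, (-1:ℝ)^(s.card - b.card) * ∑ c ∈ b.powerset, u c := by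
      rw [← Finset.sum_neg_distrib]
      apply Finset.sum_congr rfl
      intro b hb
      rw [mem_powerset] at hb
      have : s.card + 1 - b.card = (s.card - b.card) + 1 := by
        have := card_le_card hb; omega
      rw [hsc, this, pow_succ]; ring
    have key2 : ∑ b ∈ s.powerset,
          (-1:ℝ)^((insert a s).card - (insert a b).card) * ∑ c ∈ (insert a b).powerset, u c
        = (∑ b ∈ s.powerset, (-1:ℝ)^(s.card - b.card) * ∑ c ∈ b.powerset, u c)
          + ∑ b ∈ s.powerset, (-1:ℝ)^(s.card - b.card) * ∑ c ∈ b.powerset, u (insert a c) := by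
      rw [← Finset.sum_add_distrib]
      apply Finset.sum_congr rfl
      intro b hb
      rw [mem_powerset] at hb
      have hab : a ∉ b := fun h => ha (hb h)
      have hbc : (insert a b).card = b.card + 1 := card_insert_of_notMem hab
      have hsub : s.card + 1 - (b.card + 1) = s.card - b.card := by omega
      rw [Finset.sum_powerset_insert hab, hsc, hbc, hsub]
      ring
    rw [key1, key2, ih (fun c => u (insert a c))]
    ring

/-- Replace the coordinates of `x` outside `b` by the reference configuration `z`. -/
def maskZ {A : Type*} [DecidableEq A] {X : A → Type*} (z x : ∀ a, X a) (b : Finset A) :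
    ∀ a, X a := fun a => if a ∈ b then x a else z a




/-- The conditional distribution of coordinate `j` given the remaining coordinates,
`p(x_j | x_{A∖{j}}) = p(x) / ∑_t p(x with j-th coordinate t)`. -/
noncomputable def conditional {A : Type*} [Fintype A] [DecidableEq A]
    {X : A → Type*} [∀ a, Fintype (X a)]
    (p : (∀ a, X a) → ℝ) (j : A) (x : ∀ a, X a) : ℝ :=
  p x / ∑ t : X j, p (Function.update x j t)

/-- A strictly positive conditional distribution `p(x_j | x_{A∖{j}})` arising from a
strictly positive joint distribution on a finite product space admits a Gibbs
representation with potentials normalized with respect to zero (where the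
"partition function" `Z_j` may depend on the coordinates other than `j`), and the
clique potential for any clique `q` containing `j` in this representation is
unique: any two zero-normalized representations of the conditional assign equal
potential to `q`. -/
theorem conditional_zero_normalized_representation
    {A : Type*} [Fintype A] [DecidableEq A] (X : A → Type*) [∀ a, Fintype (X a)]
    (z : ∀ a, X a) (p : (∀ a, X a) → ℝ)
    (hpos : ∀ x, 0 < p x) (hsum : ∑ x, p x = 1) (j : A) :
    (∃ (F : Finset A → (∀ a, X a) → ℝ) (Zj : (∀ a, X a) → ℝ),
      (∀ c x y, (∀ v ∈ c, x v = y v) → F c x = F c y) ∧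
      (∀ (c : Finset A) x, (∃ t ∈ c, x t = z t) → F c x = 0) ∧
      (∀ x, 0 < Zj x) ∧
      (∀ x y, (∀ v, v ≠ j → x v = y v) → Zj x = Zj y) ∧
      (∀ x, conditional p j x = (1 / Zj x) * Real.exp (-∑ c : Finset A, F c x))) ∧
    (∀ (F F' : Finset A → (∀ a, X a) → ℝ) (Zj Zj' : (∀ a, X a) → ℝ),
      (∀ c x y, (∀ v ∈ c, x v = y v) → F c x = F c y) →
      (∀ (c : Finset A) x, (∃ t ∈ c, x t = z t) → F c x = 0) →
      (∀ x, 0 < Zj x) →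
      (∀ x y, (∀ v, v ≠ j → x v = y v) → Zj x = Zj y) →
      (∀ x, conditional p j x = (1 / Zj x) * Real.exp (-∑ c : Finset A, F c x)) →
      (∀ c x y, (∀ v ∈ c, x v = y v) → F' c x = F' c y) →
      (∀ (c : Finset A) x, (∃ t ∈ c, x t = z t) → F' c x = 0) →
      (∀ x, 0 < Zj' x) →
      (∀ x y, (∀ v, v ≠ j → x v = y v) → Zj' x = Zj' y) →
      (∀ x, conditional p j x = (1 / Zj' x) * Real.exp (-∑ c : Finset A, F' c x)) →
      ∀ q : Finset A, j ∈ q → F q = F' q) := by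
  constructor
  · -- Existence
    refine ⟨fun c x => -∑ b ∈ c.powerset, (-1:ℝ)^(c.card - b.card) * Real.log (p (maskZ z x b)),
      fun x => ∑ t : X j, p (Function.update x j t), ?_, ?_, ?_, ?_, ?_⟩
    · intro c x y hxy
      rw [neg_inj]
      apply Finset.sum_congr rfl
      intro b hb
      rw [mem_powerset] at hb
      have : maskZ z x b = maskZ z y b := by
        funext a
        unfold maskZ
        by_cases hab : a ∈ b
        · simp [hab, hxy a (hb hab)]
        · simp [hab]
      rw [this]
    · rintro c x ⟨t, ht, hxt⟩
      rw [neg_eq_zero]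
      apply pair_cancel c t ht
      intro b hb
      have htb : t ∉ b := fun h => (notMem_erase t c) (hb h)
      have : maskZ z x (insert t b) = maskZ z x b := by
        funext a
        unfold maskZ
        rcases eq_or_ne a t with rfl | hat
        · simp [htb, hxt]
        · simp [mem_insert, hat]
      rw [this]
    · intro x
      exact Finset.sum_pos (fun t _ => hpos _) ⟨x j, mem_univ _⟩
    · intro x y hxy
      apply Finset.sum_congr rfl
      intro t _
      congr 1
      funext v
      rcases eq_or_ne v j with rfl | hv
      · simp
      · rw [Function.update_of_ne hv, Function.update_of_ne hv, hxy v hv]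
    · intro x
      have hS : ∑ c : Finset A,
          (-∑ b ∈ c.powerset, (-1:ℝ)^(c.card - b.card) * Real.log (p (maskZ z x b)))
          = -Real.log (p x) := by
        rw [Finset.sum_neg_distrib]
        congr 1
        rw [← Finset.powerset_univ]
        rw [mobiusA (univ : Finset A) (fun b => Real.log (p (maskZ z x b)))]
        have hmx : maskZ z x univ = x := funext fun a => if_pos (mem_univ a)
        rw [hmx]
      rw [conditional, hS, neg_neg, Real.exp_log (hpos x), one_div, div_eq_mul_inv, mul_comm]
  · -- Uniqueness
    intro F F' Zj Zj' hFloc hFzero hZpos hZinv hFrep hF'loc hF'zero hZ'pos hZ'inv hF'rep q hjq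
    funext x
    have hT : ∀ y, ∑ c : Finset A, (F c y - F' c y)
        = Real.log (Zj' y) - Real.log (Zj y) := by
      intro y
      have he : (1 / Zj y) * Real.exp (-∑ c : Finset A, F c y)
          = (1 / Zj' y) * Real.exp (-∑ c : Finset A, F' c y) := by
        rw [← hFrep y, ← hF'rep y]
      have l1 : Real.log ((1 / Zj y) * Real.exp (-∑ c : Finset A, F c y))
          = -Real.log (Zj y) + -∑ c : Finset A, F c y := by
        rw [Real.log_mul (by have := hZpos y; positivity) (Real.exp_ne_zero _), Real.log_exp,
          one_div, Real.log_inv]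
      have l2 : Real.log ((1 / Zj' y) * Real.exp (-∑ c : Finset A, F' c y))
          = -Real.log (Zj' y) + -∑ c : Finset A, F' c y := by
        rw [Real.log_mul (by have := hZ'pos y; positivity) (Real.exp_ne_zero _), Real.log_exp,
          one_div, Real.log_inv]
      have := congrArg Real.log he
      rw [l1, l2] at this
      rw [Finset.sum_sub_distrib]
      linarith
    have key : ∀ b : Finset A, ∑ c ∈ b.powerset, (F c x - F' c x)
        = Real.log (Zj' (maskZ z x b)) - Real.log (Zj (maskZ z x b)) := by
      intro b
      rw [← hT (maskZ z x b)]
      have h1 : ∑ c : Finset A, (F c (maskZ z x b) - F' c (maskZ z x b))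
          = ∑ c ∈ b.powerset, (F c (maskZ z x b) - F' c (maskZ z x b)) := by
        rw [eq_comm]
        apply Finset.sum_subset (subset_univ _)
        intro c _ hc
        rw [mem_powerset] at hc
        obtain ⟨t, htc, htb⟩ := Finset.not_subset.mp hc
        have hzt : maskZ z x b t = z t := if_neg htb
        rw [hFzero c _ ⟨t, htc, hzt⟩, hF'zero c _ ⟨t, htc, hzt⟩, sub_zero]
      rw [h1]
      apply Finset.sum_congr rfl
      intro c hc
      rw [mem_powerset] at hc
      have hagree : ∀ v ∈ c, maskZ z x b v = x v := fun v hv => if_pos (hc hv)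
      rw [hFloc c _ x hagree, hF'loc c _ x hagree]
    have hrec := mobiusB q (fun c => F c x - F' c x)
    have h2 : ∑ b ∈ q.powerset, (-1:ℝ)^(q.card - b.card)
          * (Real.log (Zj' (maskZ z x b)) - Real.log (Zj (maskZ z x b)))
        = F q x - F' q x := by
      rw [← hrec]
      apply Finset.sum_congr rfl
      intro b _
      rw [key b]
    have hzero : ∑ b ∈ q.powerset, (-1:ℝ)^(q.card - b.card)
        * (Real.log (Zj' (maskZ z x b)) - Real.log (Zj (maskZ z x b))) = 0 := by
      apply pair_cancel q j hjq
      intro b hb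
      have hjb : j ∉ b := fun h => (notMem_erase j q) (hb h)
      have hagree : ∀ v, v ≠ j → maskZ z x (insert j b) v = maskZ z x b v := by
        intro v hv
        unfold maskZ
        simp [mem_insert, hv]
      rw [hZinv _ _ hagree, hZ'inv _ _ hagree]
    have := h2.symm.trans hzero
    linarith
end

section
/- Let G be the complete bipartite graph K_{m,n} (the graph of a restricted Boltzmann machine) with m, n ≥ 2, and let q = {u, v} be any edge (u on the left side, v on the right side). Then the 1-neighbourhood A_q of q equals the entire vertex set V, whereas the smaller set A = q ∪ N(v) (equivalently {v} ∪ leftside) is a proper subset of V satisfying the Strong LAP condition for q. -/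
/-- In the complete bipartite graph `K_{m,n}` (an RBM graph) with `m, n ≥ 2`, for
any edge-clique `q = {u, v}` (with `u` on the left and `v` on the right), the
1-neighbourhood `A_q = ⋃ {c : clique, c ∩ q ≠ ∅}` is the whole vertex set, whereas
`A = q ∪ N(v) = {v} ∪ L` is a proper subset of the vertices satisfying the Strong
LAP condition for `q`. -/
theorem rbm_strongLAP (m n : ℕ) (hm : 2 ≤ m) (hn : 2 ≤ n) (u : Fin m) (v : Fin n) :
    (⋃₀ {c : Set (Fin m ⊕ Fin n) |
          (completeBipartiteGraph (Fin m) (Fin n)).IsClique c ∧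
          (c ∩ {Sum.inl u, Sum.inr v}).Nonempty}) = Set.univ ∧
    ({Sum.inr v} ∪ Set.range Sum.inl : Set (Fin m ⊕ Fin n)) ≠ Set.univ ∧
    StrongLAP (completeBipartiteGraph (Fin m) (Fin n))
      ({Sum.inr v} ∪ Set.range Sum.inl) ({Sum.inl u, Sum.inr v}) := by
  refine ⟨?_, ?_, ?_⟩
  · ext x
    simp only [Set.mem_sUnion, Set.mem_setOf_eq, Set.mem_univ, iff_true]
    rcases x with a | b
    · refine ⟨{Sum.inl a, Sum.inr v}, ⟨?_, ⟨Sum.inr v, by simp⟩⟩, by simp⟩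
      intro x hx y hy hxy
      simp only [Set.mem_insert_iff, Set.mem_singleton_iff] at hx hy
      rcases hx with rfl | rfl <;> rcases hy with rfl | rfl <;> simp_all
    · refine ⟨{Sum.inl u, Sum.inr b}, ⟨?_, ⟨Sum.inl u, by simp⟩⟩, by simp⟩
      intro x hx y hy hxy
      simp only [Set.mem_insert_iff, Set.mem_singleton_iff] at hx hy
      rcases hx with rfl | rfl <;> rcases hy with rfl | rfl <;> simp_all
  · intro h
    obtain ⟨w, hw⟩ : ∃ w : Fin n, w ≠ v := by
      have : Nontrivial (Fin n) := Fin.nontrivial_iff_two_le.mpr hn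
      exact exists_ne v
    have : (Sum.inr w : Fin m ⊕ Fin n) ∈ ({Sum.inr v} ∪ Set.range Sum.inl : Set (Fin m ⊕ Fin n)) := by
      rw [h]; trivial
    rcases this with h1 | h2
    · exact hw (by simpa using h1)
    · simp at h2
  · refine ⟨?_, Sum.inr v, by simp, Sum.inl u, by simp, by simp, ?_⟩
    · intro x hx
      rcases hx with rfl | rfl
      · exact Or.inr ⟨u, rfl⟩
      · exact Or.inl rfl
    rintro ⟨w, hpath, hne, hnotin⟩
    cases w with
    | cons h p =>
      rename_i b
      cases hp : p.support with
      | nil => exact (SimpleGraph.Walk.support_ne_nil p hp).elim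
      | cons c l =>
        have hc : c = b := by
          have := p.support_eq_cons
          rw [hp] at this
          exact (List.cons.injEq .. ▸ this).1
        cases l with
        | nil =>
          simp [SimpleGraph.Walk.support_cons, hp] at hne
        | cons d l' =>
          have hmem : b ∈ (SimpleGraph.Walk.cons h p).support.tail.dropLast := by
            simp [SimpleGraph.Walk.support_cons, hp, hc]
          have hbA := hnotin b hmem
          have hadj : (completeBipartiteGraph (Fin m) (Fin n)).Adj (Sum.inr v) b := h
          simp only [completeBipartiteGraph] at hadj
          rcases hadj with ⟨hl, _⟩ | ⟨_, hl⟩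
          · simp at hl
          · rcases b with a | a
            · exact hbA (Or.inr ⟨a, rfl⟩)
            · simp at hl
end

section
/- Let p(· | θ) be a strictly positive Gibbs distribution on finite variables with zero-normalized identifiable potentials over the clique system C of graph G, and let q ∈ C with q ⊆ A_q ⊆ V where A_q satisfies the Strong LAP condition for q. If p(x_{A_q} | α) is any zero-normalized identifiable Gibbs parametrization of the marginal distribution over A_q, then α_q = θ_q (Strong LAP Argument). -/
/-!
Apply to the log-marginal over `A_q` the Möbius inversion over the subsets of `q` relative to the
vacuum `z`. On a sum of zero-normalized potentials it returns the `q`-potential, and it annihilates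
every function that does not depend on some coordinate in `q`.

Let `i, j ∈ q` be as in the Strong LAP condition and let `W` be the part of `V \ A_q` reachable
from `i` through `V \ A_q`. A clique leaving `A_q` either meets `W`, and then lies in `A_q ∪ W` and
misses `j`, or misses `W` and then also misses `i`. Summing out `V \ A_q` therefore factorizes, and
the log-marginal is the energy of the cliques inside `A_q` plus a function free of `x_j` plus a
function free of `x_i`. So the `q`-potential of the marginal is `E_q(θ_q)` as well as `E_q(α_q)`,
and identifiability gives `α_q = θ_q`.
-/

lemma DependsOn.comp_left {ι β γ : Type*} {α : ι → Type*} {f : (∀ i, α i) → β} {s : Set ι}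
    (hf : DependsOn f s) (g : β → γ) : DependsOn (g ∘ f) s :=
  fun _ _ h => congrArg g (hf h)

lemma DependsOn.finset_sum {ι κ M : Type*} {α : ι → Type*} [AddCommMonoid M] {C : Finset κ}
    {f : κ → (∀ i, α i) → M} {s : Set ι} (hf : ∀ c ∈ C, DependsOn (f c) s) :
    DependsOn (fun x => ∑ c ∈ C, f c x) s :=
  fun _ _ h => Finset.sum_congr rfl fun c hc => hf c hc h

namespace SimpleGraph

variable {V : Type*} {G : SimpleGraph V}

lemma relPathConn_of_walk_of_adj {A : Set V} {i j v : V} (hi : i ∈ A) (hj : j ∈ A)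
    (hij : i ≠ j) (w : G.Walk i v) (hw : ∀ u ∈ w.support.tail, u ∉ A) (hv : v ∉ A)
    (hvj : G.Adj v j) : RelPathConn G A i j := by
  classical
  set P := w.bypass
  have hP : ∀ u ∈ P.support.tail, u ∉ A := fun u hu =>
    hw u (w.support_bypass_sublist_support.tail.subset hu)
  have hjP : j ∉ P.support := by
    rw [← P.cons_tail_support, List.mem_cons]
    rintro (rfl | hjP)
    exacts [hij rfl, hP j hjP hj]
  have hsupp : (P.concat hvj).support.tail.dropLast = P.support.tail := by
    rw [Walk.support_concat, ← P.cons_tail_support]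
    simp
  refine ⟨P.concat hvj, w.bypass_isPath.concat hjP hvj, ?_, ?_⟩
  · rw [hsupp]
    exact List.ne_nil_of_mem (P.end_mem_tail_support_of_ne (by rintro rfl; exact hv hi))
  · rwa [hsupp]

lemma exists_clique_split_of_not_relPathConn [Fintype V] [DecidableEq V] {A : Finset V}
    {i j : V} (hi : i ∈ A) (hj : j ∈ A) (hij : i ≠ j) (hnc : ¬ RelPathConn G A i j) :
    ∃ W : Finset V, Disjoint A W ∧ ∀ c : Finset V, G.IsClique (c : Set V) → ¬ c ⊆ A →
      (c ⊆ A ∪ W ∧ j ∉ c) ∨ (Disjoint c W ∧ i ∉ c) := by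
  classical
  let R (v : V) : Prop := ∃ w : G.Walk i v, ∀ u ∈ w.support.tail, u ∉ A
  have hRi : R i := ⟨.nil, by simp⟩
  have hR_adj {v u : V} (hv : R v) (hu : u ∉ A) (hvu : G.Adj v u) : R u := by
    obtain ⟨w, hw⟩ := hv
    refine ⟨w.concat hvu, fun x hx => ?_⟩
    rw [Walk.support_concat, ← w.cons_tail_support] at hx
    simp only [List.cons_append, List.tail_cons, List.mem_append, List.mem_singleton] at hx
    rcases hx with hx | rfl
    exacts [hw x hx, hu]
  refine ⟨Finset.univ.filter fun v => v ∉ A ∧ R v,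
    Finset.disjoint_left.2 fun v hv hW => (Finset.mem_filter.1 hW).2.1 hv, fun c hc hcA => ?_⟩
  obtain ⟨v₀, hv₀c, hv₀A⟩ := Finset.not_subset.1 hcA
  by_cases hW : ∃ w ∈ c, w ∉ A ∧ R w
  · obtain ⟨w, hwc, hwA, hRw⟩ := hW
    refine .inl ⟨fun u hu => ?_, fun hjc => ?_⟩
    · by_cases huA : u ∈ A
      · exact Finset.mem_union_left _ huA
      · refine Finset.mem_union_right _ (Finset.mem_filter.2 ⟨Finset.mem_univ _, huA, ?_⟩)
        by_cases huw : u = w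
        · exact huw ▸ hRw
        · exact hR_adj hRw huA (hc hwc hu (Ne.symm huw))
    · obtain ⟨p, hp⟩ := hRw
      exact hnc (relPathConn_of_walk_of_adj hi hj hij p hp hwA (hc hwc hjc fun h => hwA (h ▸ hj)))
  · push Not at hW
    refine .inr ⟨Finset.disjoint_left.2 fun u huc huW => ?_, fun hic => ?_⟩
    · obtain ⟨-, huA, hRu⟩ := Finset.mem_filter.1 huW
      exact hW u huc huA hRu
    · exact hW v₀ hv₀c hv₀A (hR_adj hRi hv₀A (hc hic hv₀c fun h => hv₀A (h ▸ hi)))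

end SimpleGraph

section Configurations

variable {V : Type*} [Fintype V] [DecidableEq V] {X : V → Type*} [∀ v, Fintype (X v)]
  [∀ v, DecidableEq (X v)]

def agreeOn (A : Finset V) (x : ∀ v, X v) : Finset (∀ v, X v) :=
  Finset.univ.filter fun y => ∀ v ∈ A, y v = x v

@[simp]
lemma mem_agreeOn {A : Finset V} {x y : ∀ v, X v} : y ∈ agreeOn A x ↔ ∀ v ∈ A, y v = x v := by
  simp [agreeOn]

lemma self_mem_agreeOn (A : Finset V) (x : ∀ v, X v) : x ∈ agreeOn A x := by
  simp

lemma DependsOn.sum_agreeOn {M : Type*} [AddCommMonoid M] {f : (∀ v, X v) → M} {D : Set V}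
    (hf : DependsOn f D) (s : Finset V) :
    DependsOn (fun x => ∑ y ∈ agreeOn s x, f y) (↑s ∩ D) := by
  intro x x' hxx'
  refine Finset.sum_nbij' (fun y => s.piecewise x' y) (fun y => s.piecewise x y) ?_ ?_ ?_ ?_ ?_
  · simp +contextual
  · simp +contextual
  · intro y hy
    ext v
    by_cases hv : v ∈ s <;> simp_all
  · intro y hy
    ext v
    by_cases hv : v ∈ s <;> simp_all
  · intro y hy
    refine hf fun v hv => ?_
    by_cases hvs : v ∈ s
    · simp_all
    · simp [hvs]

lemma sum_agreeOn_mul {R : Type*} [CommSemiring R] {A W : Finset V} (hAW : Disjoint A W)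
    {f g : (∀ v, X v) → R} (hf : DependsOn f ↑(A ∪ W)) (hg : DependsOn g ↑Wᶜ)
    (x : ∀ v, X v) :
    ∑ y ∈ agreeOn A x, f y * g y =
      (∑ y ∈ agreeOn Wᶜ x, f y) * ∑ y ∈ agreeOn (A ∪ W) x, g y := by
  rw [Finset.sum_mul_sum, ← Finset.sum_product']
  symm
  refine Finset.sum_nbij' (fun p => W.piecewise p.1 p.2)
    (fun y => (W.piecewise y x, (A ∪ W).piecewise x y)) ?_ ?_ ?_ ?_ ?_
  · rintro ⟨y₁, y₂⟩ hy
    simp only [Finset.mem_product, mem_agreeOn] at hy ⊢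
    intro v hv
    have hvW : v ∉ W := Finset.disjoint_left.1 hAW hv
    simp [hvW, hy.2 v (Finset.mem_union_left _ hv)]
  · intro y hy
    simp_all +contextual
  · rintro ⟨y₁, y₂⟩ hy
    simp only [Finset.mem_product, mem_agreeOn] at hy
    ext v
    · by_cases hv : v ∈ W <;> simp_all
    · by_cases hv : v ∈ A ∪ W <;> simp_all
  · intro y hy
    simp only [mem_agreeOn] at hy
    ext v
    by_cases hvW : v ∈ W
    · simp [hvW]
    · by_cases hvA : v ∈ A <;> simp_all
  · rintro ⟨y₁, y₂⟩ hy
    simp only [Finset.mem_product, mem_agreeOn] at hy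
    congr 1
    · refine hf fun v hv => ?_
      by_cases hvW : v ∈ W
      · simp [hvW]
      · simp_all
    · refine hg fun v hv => ?_
      simp_all

end Configurations

section CanonicalPotential

open Finset

variable {V : Type*} [DecidableEq V] {X : V → Type*} (z : ∀ v, X v) (q : Finset V)

/-- The canonical `q`-potential of a log-density `F` relative to the vacuum `z`: Möbius inversion
over the subsets of `q`. -/
def canonicalPotential : ((∀ v, X v) → ℝ) →ₗ[ℝ] (∀ v, X v) → ℝ where
  toFun F x := ∑ s ∈ q.powerset, (-1) ^ #(q \ s) * F (s.piecewise x z)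
  map_add' F G := by
    ext x
    simp [mul_add, sum_add_distrib]
  map_smul' r F := by
    ext x
    simp [mul_sum, mul_left_comm]

variable {z q}

lemma canonicalPotential_apply (F : (∀ v, X v) → ℝ) (x : ∀ v, X v) :
    canonicalPotential z q F x = ∑ s ∈ q.powerset, (-1) ^ #(q \ s) * F (s.piecewise x z) :=
  rfl

lemma canonicalPotential_eq_zero_of_dependsOn {F : (∀ v, X v) → ℝ} {t : V} (ht : t ∈ q)
    (hF : DependsOn F {t}ᶜ) : canonicalPotential z q F = 0 := by
  obtain ⟨r, rfl, htr⟩ : ∃ r, q = insert t r ∧ t ∉ r := ⟨q.erase t, (insert_erase ht).symm,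
    notMem_erase t q⟩
  ext x
  rw [canonicalPotential_apply, sum_powerset_insert htr, ← sum_add_distrib]
  refine sum_eq_zero fun s hs => ?_
  have hts : t ∉ s := fun h => htr (mem_powerset.1 hs h)
  have hFs : F ((insert t s).piecewise x z) = F (s.piecewise x z) :=
    hF fun v hv => by simp [piecewise, Set.mem_compl_singleton_iff.1 hv]
  have hcard : #(insert t r \ s) = #(insert t r \ insert t s) + 1 := by
    rw [insert_sdiff_of_notMem _ hts, insert_sdiff_insert, sdiff_insert_of_notMem htr,
      card_insert_of_notMem fun h => htr (mem_sdiff.1 h).1]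
  rw [hFs, hcard, pow_succ]
  ring

lemma apply_piecewise_of_isNormalized {F : (∀ v, X v) → ℝ} {c : Finset V}
    (hF : DependsOn F c) (hF₀ : ∀ x, (∃ t ∈ c, x t = z t) → F x = 0) (s : Finset V)
    (x : ∀ v, X v) : F (s.piecewise x z) = if c ⊆ s then F x else 0 := by
  split_ifs with hcs
  · exact hF fun v hv => piecewise_eq_of_mem _ _ _ (hcs hv)
  · obtain ⟨t, htc, hts⟩ := not_subset.1 hcs
    exact hF₀ _ ⟨t, htc, piecewise_eq_of_notMem _ _ _ hts⟩

lemma canonicalPotential_of_isNormalized {F : (∀ v, X v) → ℝ} {c : Finset V}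
    (hF : DependsOn F c) (hF₀ : ∀ x, (∃ t ∈ c, x t = z t) → F x = 0) :
    canonicalPotential z q F = if c = q then F else 0 := by
  by_cases hqc : q ⊆ c
  · ext x
    rw [canonicalPotential_apply, sum_eq_single_of_mem q (mem_powerset_self q)]
    · by_cases hcq : c = q
      · subst hcq
        simp [apply_piecewise_of_isNormalized hF hF₀]
      · have hcq' : ¬ c ⊆ q := fun h => hcq (subset_antisymm h hqc)
        simp [apply_piecewise_of_isNormalized hF hF₀, hcq, hcq']
    · intro s hs hsq
      rw [apply_piecewise_of_isNormalized hF hF₀, if_neg, mul_zero]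
      exact fun hcs => hsq (subset_antisymm (mem_powerset.1 hs) (hqc.trans hcs))
  · obtain ⟨t, htq, htc⟩ := not_subset.1 hqc
    rw [if_neg (by rintro rfl; exact hqc subset_rfl)]
    exact canonicalPotential_eq_zero_of_dependsOn htq
      (hF.mono fun v hv hvt => htc (Set.mem_singleton_iff.1 hvt ▸ hv))

lemma canonicalPotential_const_sub_sum {D : Finset (Finset V)} {F : Finset V → (∀ v, X v) → ℝ}
    (hF : ∀ c ∈ D, DependsOn (F c) c) (hF₀ : ∀ c ∈ D, ∀ x, (∃ t ∈ c, x t = z t) → F c x = 0)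
    (hq : q ∈ D) (hq' : q.Nonempty) (a : ℝ) :
    canonicalPotential z q (fun x => a - ∑ c ∈ D, F c x) = -F q := by
  obtain ⟨t, ht⟩ := hq'
  have hsplit : (fun x => a - ∑ c ∈ D, F c x) = (fun _ => a) - ∑ c ∈ D, F c := by
    ext x
    simp [Finset.sum_apply]
  rw [hsplit, map_sub, map_sum,
    canonicalPotential_eq_zero_of_dependsOn ht ((dependsOn_const a).mono (Set.empty_subset _)),
    sum_congr rfl fun c hc => canonicalPotential_of_isNormalized (hF c hc) (hF₀ c hc),
    sum_ite_eq', if_pos hq, zero_sub]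

end CanonicalPotential

section Marginal

variable {V : Type*} [Fintype V] [DecidableEq V] {X : V → Type*} [∀ v, Fintype (X v)]
  [∀ v, DecidableEq (X v)]

lemma log_sum_agreeOn_exp_eq {C : Finset (Finset V)} {U : Finset V → (∀ v, X v) → ℝ}
    (hU : ∀ c ∈ C, DependsOn (U c) c) {A W : Finset V} (hAW : Disjoint A W) {i j : V}
    (hsplit : ∀ c ∈ C, ¬ c ⊆ A → (c ⊆ A ∪ W ∧ j ∉ c) ∨ (Disjoint c W ∧ i ∉ c)) :
    ∃ f g : (∀ v, X v) → ℝ, DependsOn f {j}ᶜ ∧ DependsOn g {i}ᶜ ∧ ∀ x,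
      Real.log (∑ y ∈ agreeOn A x, Real.exp (-∑ c ∈ C, U c y)) =
        -∑ c ∈ C with c ⊆ A, U c x + f x + g x := by
  set Cout := C.filter fun c => ¬ c ⊆ A
  set C₁ := Cout.filter fun c => c ⊆ A ∪ W ∧ j ∉ c
  set C₂ := Cout.filter fun c => ¬ (c ⊆ A ∪ W ∧ j ∉ c)
  set F₁ : (∀ v, X v) → ℝ := fun y => Real.exp (-∑ c ∈ C₁, U c y)
  set F₂ : (∀ v, X v) → ℝ := fun y => Real.exp (-∑ c ∈ C₂, U c y)
  have hF₁ : DependsOn F₁ (↑(A ∪ W) ∩ {j}ᶜ) := by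
    refine (DependsOn.finset_sum fun c hc => ?_).comp_left fun e => Real.exp (-e)
    simp only [C₁, Cout, Finset.mem_filter] at hc
    exact (hU c hc.1.1).mono fun v hv => ⟨hc.2.1 hv, fun hvj => hc.2.2 (hvj ▸ hv)⟩
  have hF₂ : DependsOn F₂ (↑Wᶜ ∩ {i}ᶜ) := by
    refine (DependsOn.finset_sum fun c hc => ?_).comp_left fun e => Real.exp (-e)
    simp only [C₂, Cout, Finset.mem_filter] at hc
    obtain ⟨hcW, hic⟩ := (hsplit c hc.1.1 hc.1.2).resolve_left hc.2
    exact (hU c hc.1.1).mono fun v hv =>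
      ⟨Finset.mem_compl.2 (Finset.disjoint_left.1 hcW hv), fun hvi => hic (hvi ▸ hv)⟩
  have hS₁ : ∀ x, 0 < ∑ y ∈ agreeOn Wᶜ x, F₁ y := fun x =>
    Finset.sum_pos (fun _ _ => Real.exp_pos _) ⟨x, self_mem_agreeOn _ _⟩
  have hS₂ : ∀ x, 0 < ∑ y ∈ agreeOn (A ∪ W) x, F₂ y := fun x =>
    Finset.sum_pos (fun _ _ => Real.exp_pos _) ⟨x, self_mem_agreeOn _ _⟩
  refine ⟨fun x => Real.log (∑ y ∈ agreeOn Wᶜ x, F₁ y),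
    fun x => Real.log (∑ y ∈ agreeOn (A ∪ W) x, F₂ y),
    ((hF₁.sum_agreeOn _).mono fun v hv => hv.2.2).comp_left Real.log,
    ((hF₂.sum_agreeOn _).mono fun v hv => hv.2.2).comp_left Real.log, fun x => ?_⟩
  have henergy : ∀ y ∈ agreeOn A x, Real.exp (-∑ c ∈ C, U c y) =
      Real.exp (-∑ c ∈ C with c ⊆ A, U c x) * (F₁ y * F₂ y) := by
    intro y hy
    have hin : ∑ c ∈ C with c ⊆ A, U c y = ∑ c ∈ C with c ⊆ A, U c x :=
      Finset.sum_congr rfl fun c hc =>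
        hU c (Finset.mem_filter.1 hc).1 fun v hv =>
          mem_agreeOn.1 hy v ((Finset.mem_filter.1 hc).2 hv)
    rw [← Finset.sum_filter_add_sum_filter_not C (· ⊆ A),
      ← Finset.sum_filter_add_sum_filter_not Cout (fun c => c ⊆ A ∪ W ∧ j ∉ c), hin, neg_add,
      neg_add, Real.exp_add, Real.exp_add]
  rw [Finset.sum_congr rfl henergy, ← Finset.mul_sum,
    sum_agreeOn_mul hAW (hF₁.mono Set.inter_subset_left) (hF₂.mono Set.inter_subset_left),
    Real.log_mul (Real.exp_ne_zero _) (mul_ne_zero (hS₁ x).ne' (hS₂ x).ne'), Real.log_exp,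
    Real.log_mul (hS₁ x).ne' (hS₂ x).ne', add_assoc]

end Marginal

theorem strong_LAP_argument_general
    {V : Type*} [Fintype V] [DecidableEq V] (X : V → Type*) [∀ v, Fintype (X v)]
    [∀ v, DecidableEq (X v)] (z : ∀ v, X v) (G : SimpleGraph V)
    (Θ : Finset V → Type*) (E : (c : Finset V) → Θ c → (∀ v, X v) → ℝ)
    (hEloc : ∀ c (ϑ : Θ c) x y, (∀ v ∈ c, x v = y v) → E c ϑ x = E c ϑ y)
    (hEnorm : ∀ c (ϑ : Θ c) x, (∃ t ∈ c, x t = z t) → E c ϑ x = 0)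
    (hEident : ∀ c (ϑ ϑ' : Θ c), E c ϑ = E c ϑ' → ϑ = ϑ')
    (C : Finset (Finset V)) (hC : ∀ c ∈ C, G.IsClique (c : Set V))
    (θ : (c : Finset V) → Θ c)
    (Z : ℝ) (hZ : 0 < Z) (p : (∀ v, X v) → ℝ)
    (hp : ∀ x, p x = (1 / Z) * Real.exp (-∑ c ∈ C, E c (θ c) x))
    (Aq q : Finset V) (hqC : q ∈ C) (hqA : q ⊆ Aq)
    (hlap : StrongLAP G (Aq : Set V) (q : Set V))
    (C' : Finset (Finset V)) (hqC' : q ∈ C')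
    (α : (c : Finset V) → Θ c)
    (Z' : ℝ) (hZ' : 0 < Z')
    (hmarg : ∀ x, (∑ y : ∀ v, X v, if ∀ v ∈ Aq, y v = x v then p y else 0) =
        (1 / Z') * Real.exp (-∑ c ∈ C', E c (α c) x)) :
    α q = θ q := by
  obtain ⟨-, i, hi, j, hj, hij, hnc⟩ := hlap
  obtain ⟨W, hAW, hW⟩ :=
    SimpleGraph.exists_clique_split_of_not_relPathConn (hqA hi) (hqA hj) hij hnc
  obtain ⟨f, g, hf, hg, hlog⟩ := log_sum_agreeOn_exp_eq (fun c _ x y h => hEloc c (θ c) x y h)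
    hAW fun c hc => hW c (hC c hc)
  have hlogmarg : ∀ x, Real.log (1 / Z') - ∑ c ∈ C', E c (α c) x =
      Real.log (1 / Z) - ∑ c ∈ C with c ⊆ Aq, E c (θ c) x + f x + g x := by
    intro x
    have hpos : 0 < ∑ y ∈ agreeOn Aq x, Real.exp (-∑ c ∈ C, E c (θ c) y) :=
      Finset.sum_pos (fun _ _ => Real.exp_pos _) ⟨x, self_mem_agreeOn _ _⟩
    have h := hmarg x
    rw [← Finset.sum_filter] at h
    change ∑ y ∈ agreeOn Aq x, p y = _ at h
    rw [Finset.sum_congr rfl fun y _ => hp y, ← Finset.mul_sum] at h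
    have h' := congrArg Real.log h
    rw [Real.log_mul (by positivity) hpos.ne', hlog,
      Real.log_mul (by positivity) (Real.exp_ne_zero _), Real.log_exp] at h'
    linarith
  have hqCA : q ∈ C.filter (· ⊆ Aq) := Finset.mem_filter.2 ⟨hqC, hqA⟩
  have hE : -E q (α q) = -E q (θ q) := calc
    -E q (α q) = canonicalPotential z q fun x => Real.log (1 / Z') - ∑ c ∈ C', E c (α c) x :=
      (canonicalPotential_const_sub_sum (fun c _ x y h => hEloc c (α c) x y h)
        (fun c _ => hEnorm c (α c)) hqC' ⟨i, hi⟩ _).symm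
    _ = canonicalPotential z q
          ((fun x => Real.log (1 / Z) - ∑ c ∈ C with c ⊆ Aq, E c (θ c) x) + f + g) :=
      congrArg _ (funext hlogmarg)
    _ = -E q (θ q) := by
      rw [map_add, map_add, canonicalPotential_eq_zero_of_dependsOn hj hf,
        canonicalPotential_eq_zero_of_dependsOn hi hg, add_zero, add_zero,
        canonicalPotential_const_sub_sum (fun c _ x y h => hEloc c (θ c) x y h)
          (fun c _ => hEnorm c (θ c)) hqCA ⟨i, hi⟩]
  exact hEident q _ _ (neg_injective hE)

/-- **Strong LAP Argument.**  Let `p(· | θ)` be a strictly positive Gibbs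
distribution with zero-normalized identifiable parametrized potentials
`E c (θ c)` over a clique system `C` of the graph `G`, and let `q ∈ C` satisfy
`q ⊆ A_q ⊆ V`, where `A_q` satisfies the Strong LAP condition for `q`.  If the
marginal over `A_q` is given a zero-normalized identifiable Gibbs parametrization
(with the same parametric form for its potentials) over a clique system `C'` of
subsets of `A_q` containing `q`, with parameters `α`, then `α q = θ q`. -/
theorem strong_LAP_argument
    {V : Type*} [Fintype V] [DecidableEq V] (X : V → Type*) [∀ v, Fintype (X v)]
    [∀ v, DecidableEq (X v)] (z : ∀ v, X v) (G : SimpleGraph V)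
    (Θ : Finset V → Type*) (E : (c : Finset V) → Θ c → (∀ v, X v) → ℝ)
    (hEloc : ∀ c (ϑ : Θ c) x y, (∀ v ∈ c, x v = y v) → E c ϑ x = E c ϑ y)
    (hEnorm : ∀ c (ϑ : Θ c) x, (∃ t ∈ c, x t = z t) → E c ϑ x = 0)
    (hEident : ∀ c (ϑ ϑ' : Θ c), E c ϑ = E c ϑ' → ϑ = ϑ')
    (C : Finset (Finset V)) (hC : ∀ c ∈ C, G.IsClique (c : Set V))
    (θ : (c : Finset V) → Θ c)
    (Z : ℝ) (hZ : 0 < Z) (p : (∀ v, X v) → ℝ)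
    (hp : ∀ x, p x = (1 / Z) * Real.exp (-∑ c ∈ C, E c (θ c) x))
    (hsum : ∑ x, p x = 1)
    (Aq q : Finset V) (hqC : q ∈ C) (hqA : q ⊆ Aq)
    (hlap : StrongLAP G (Aq : Set V) (q : Set V))
    (C' : Finset (Finset V)) (hC' : ∀ c ∈ C', c ⊆ Aq) (hqC' : q ∈ C')
    (α : (c : Finset V) → Θ c)
    (Z' : ℝ) (hZ' : 0 < Z')
    (hmarg : ∀ x, (∑ y : ∀ v, X v, if ∀ v ∈ Aq, y v = x v then p y else 0) =
        (1 / Z') * Real.exp (-∑ c ∈ C', E c (α c) x)) :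
    α q = θ q :=
  strong_LAP_argument_general X z G Θ E hEloc hEnorm hEident C hC θ Z hZ p hp Aq q hqC hqA hlap C'
    hqC' α Z' hZ' hmarg
end
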